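/- arXiv:2512.18877 — 6 statements merged into one kernel-verified Lean document; each statement's English description precedes it below -/
import Mathlib

section
/- Fix e ≥ 2 and a ∈ ℤ. For a partition λ with beta-set β = β_a(λ), removing an e-rim hook from λ corresponds exactly to replacing some b ∈ β with b − e ∉ β by b − e; that is, μ is obtained from λ by removing an e-rim hook if and only if β_a(μ) = (β_a(λ) \ {b}) ∪ {b − e} for some b ∈ β_a(λ) with b − e ∉ β_a(λ). -/
/-- A partition: a weakly decreasing, eventually zero sequence of naturals.
`f i` is the `(i+1)`-st part (rows are indexed from `1` in statements). -/
structure Ptn where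
  f : ℕ → ℕ
  antitone : ∀ ⦃i j : ℕ⦄, i ≤ j → f j ≤ f i
  ev_zero : ∃ N : ℕ, ∀ i, N ≤ i → f i = 0

namespace Ptn

/-- `(r, c)` (with `r, c ≥ 1`) is a cell of the Young diagram of `p`. -/
def cell (p : Ptn) (r c : ℕ) : Prop := 1 ≤ r ∧ 1 ≤ c ∧ c ≤ p.f (r - 1)

/-- The size `|p|`: the number of cells of the Young diagram. -/
noncomputable def size (p : Ptn) : ℕ := {x : ℕ × ℕ | p.cell x.1 x.2}.ncard

/-- `(r,c)` is in the rim of `p`: a cell such that `(r+1,c+1)` is not a cell. -/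
def rim (p : Ptn) (r c : ℕ) : Prop := p.cell r c ∧ ¬ p.cell (r + 1) (c + 1)

end Ptn

/-- Adjacency of cells (differ by `1` in exactly one coordinate). -/
def cellAdj (x y : ℕ × ℕ) : Prop :=
  (x.1 = y.1 ∧ (x.2 + 1 = y.2 ∨ y.2 + 1 = x.2)) ∨
  (x.2 = y.2 ∧ (x.1 + 1 = y.1 ∨ y.1 + 1 = x.1))

/-- A set of cells is connected (any two cells joined by a path inside the set). -/
def ConnSet (H : Set (ℕ × ℕ)) : Prop :=
  ∀ x ∈ H, ∀ y ∈ H,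
    Relation.ReflTransGen (fun u v => u ∈ H ∧ v ∈ H ∧ cellAdj u v) x y

/-- `q` is obtained from `p` by removing an `e`-rim hook: the removed set of cells
consists of `e` cells of the rim of `p` and is connected. -/
def RemHook (e : ℕ) (p q : Ptn) : Prop :=
  (∀ r c, q.cell r c → p.cell r c) ∧
  {x : ℕ × ℕ | p.cell x.1 x.2 ∧ ¬ q.cell x.1 x.2}.ncard = e ∧
  (∀ x : ℕ × ℕ, p.cell x.1 x.2 → ¬ q.cell x.1 x.2 → p.rim x.1 x.2) ∧
  ConnSet {x : ℕ × ℕ | p.cell x.1 x.2 ∧ ¬ q.cell x.1 x.2}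

/-- `p` is an `e`-core: no removable `e`-rim hook. -/
def IsECore (e : ℕ) (p : Ptn) : Prop := ¬ ∃ q : Ptn, RemHook e p q

/-- `RemChain e h p q`: `q` is obtained from `p` by removing `h` many `e`-rim hooks. -/
def RemChain (e : ℕ) : ℕ → Ptn → Ptn → Prop
  | 0, p, q => p = q
  | h + 1, p, q => ∃ r : Ptn, RemHook e p r ∧ RemChain e h r q

/-- The beta-set of `p` with respect to the charge `a`:
`β_a(p) = {p_i - i + a ∣ i ≥ 1}`. -/
def betaSet (a : ℤ) (p : Ptn) : Set ℤ :=
  {b | ∃ i : ℕ, b = (p.f i : ℤ) - (i + 1) + a}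

namespace Stmt2

/-- The `r`-th beta number. -/
def bnum (a : ℤ) (p : Ptn) (r : ℕ) : ℤ := (p.f r : ℤ) - (r + 1) + a

lemma bnum_strictAnti (a : ℤ) (p : Ptn) : StrictAnti (bnum a p) := by
  have h : ∀ n, bnum a p (n+1) < bnum a p n := by
    intro n
    have := p.antitone (by omega : n ≤ n + 1)
    simp only [bnum, Nat.succ_eq_add_one] at *
    push_cast
    omega
  exact strictAnti_nat_of_succ_lt h

lemma betaSet_eq_range (a : ℤ) (p : Ptn) : betaSet a p = Set.range (bnum a p) := by
  ext b
  simp only [betaSet, Set.mem_setOf_eq, Set.mem_range, bnum]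
  constructor
  · rintro ⟨i, hi⟩; exact ⟨i, by omega⟩
  · rintro ⟨i, hi⟩; exact ⟨i, by omega⟩

lemma strictAnti_range_eq {f g : ℕ → ℤ} (hf : StrictAnti f) (hg : StrictAnti g)
    (h : Set.range f = Set.range g) : ∀ n, f n = g n := by
  intro n
  induction n using Nat.strong_induction_on with
  | _ n ih =>
    obtain ⟨m, hm⟩ : f n ∈ Set.range g := h ▸ Set.mem_range_self n
    obtain ⟨m', hm'⟩ : g n ∈ Set.range f := h.symm ▸ Set.mem_range_self n
    -- hm : g m = f n, hm' : f m' = g n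
    rcases lt_trichotomy m n with hlt | heq | hgt
    · have : f m = f n := (ih m hlt) ▸ hm
      have := hf.injective this; omega
    · rw [← hm, heq]
    · rcases lt_trichotomy m' n with hlt' | heq' | hgt'
      · have : g m' = g n := (ih m' hlt') ▸ hm'
        have := hg.injective this; omega
      · rw [← hm', heq']
      · have h1 : f n ≤ g n := hm ▸ hg.antitone (le_of_lt hgt)
        have h2 : g n ≤ f n := hm' ▸ hf.antitone (le_of_lt hgt')
        omega

lemma betaSet_inj {a : ℤ} {p q : Ptn} (h : betaSet a p = betaSet a q) : ∀ r, p.f r = q.f r := by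
  intro r
  have := strictAnti_range_eq (bnum_strictAnti a p) (bnum_strictAnti a q)
    (by rw [← betaSet_eq_range, ← betaSet_eq_range, h]) r
  simp only [bnum] at this; omega


/-- The hook shape: rows `< i` and `> j` unchanged, staircase in between,
and a free last row `j`. (All row indices are 0-indexed `f`-indices.) -/
structure Shape (i j : ℕ) (p q : Ptn) : Prop where
  hij : i ≤ j
  hlt : ∀ r, r < i → q.f r = p.f r
  hmid : ∀ r, i ≤ r → r < j → q.f r + 1 = p.f (r + 1)
  hge : p.f (j + 1) ≤ q.f j
  hlast : q.f j < p.f j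
  hgt : ∀ r, j < r → q.f r = p.f r

/-- The removed set. -/
def RSet (p q : Ptn) : Set (ℕ × ℕ) := {x : ℕ × ℕ | p.cell x.1 x.2 ∧ ¬ q.cell x.1 x.2}

lemma mem_RSet {p q : Ptn} {x : ℕ × ℕ} :
    x ∈ RSet p q ↔ 1 ≤ x.1 ∧ q.f (x.1 - 1) < x.2 ∧ x.2 ≤ p.f (x.1 - 1) := by
  simp only [RSet, Set.mem_setOf_eq, Ptn.cell]
  constructor
  · rintro ⟨⟨h1, h2, h3⟩, h4⟩
    refine ⟨h1, ?_, h3⟩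
    by_contra hc
    exact h4 ⟨h1, h2, by omega⟩
  · rintro ⟨h1, h2, h3⟩
    exact ⟨⟨h1, by omega, h3⟩, fun ⟨_, _, hc⟩ => by omega⟩

lemma shape_le {i j : ℕ} {p q : Ptn} (S : Shape i j p q) : ∀ r, q.f r ≤ p.f r := by
  intro r
  rcases lt_or_ge r i with h | h
  · exact (S.hlt r h).le
  rcases lt_or_ge r j with h' | h'
  · have := S.hmid r h h'
    have := p.antitone (by omega : r ≤ r + 1)
    omega
  rcases eq_or_lt_of_le h' with h'' | h''
  · rw [← h'']; exact S.hlast.le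
  · exact (S.hgt r h'').le

lemma shape_row {i j : ℕ} {p q : Ptn} (S : Shape i j p q) {r : ℕ} (h : q.f r < p.f r) :
    i ≤ r ∧ r ≤ j := by
  constructor
  · by_contra hc; push_neg at hc; rw [S.hlt r hc] at h; omega
  · by_contra hc; push_neg at hc; rw [S.hgt r hc] at h; omega

/-- Nonemptiness of each removed row in `[i,j]`. -/
lemma shape_nonempty_row {i j : ℕ} {p q : Ptn} (S : Shape i j p q) {r : ℕ}
    (h1 : i ≤ r) (h2 : r ≤ j) : q.f r < p.f r := by
  rcases eq_or_lt_of_le h2 with h | h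
  · rw [h]; exact S.hlast
  · have hm := S.hmid r h1 h
    have hnext : q.f (r+1) ≤ p.f (r+1) := shape_le S (r+1)
    have := q.antitone (by omega : r ≤ r + 1)
    have := p.antitone (by omega : r ≤ r + 1)
    omega

/-- The removed set as a finset. -/
def RFin (i j : ℕ) (p q : Ptn) : Finset (ℕ × ℕ) :=
  (Finset.Icc i j).biUnion (fun r => {r + 1} ×ˢ Finset.Ioc (q.f r) (p.f r))

lemma RSet_eq_RFin {i j : ℕ} {p q : Ptn} (S : Shape i j p q) :
    RSet p q = ↑(RFin i j p q) := by
  ext x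
  simp only [RFin, mem_RSet, Finset.coe_biUnion, Set.mem_iUnion, Finset.mem_coe,
    Finset.mem_Icc, Finset.mem_product, Finset.mem_singleton, Finset.mem_Ioc, Set.mem_setOf_eq,
    Finset.mem_biUnion]
  constructor
  · rintro ⟨h1, h2, h3⟩
    refine ⟨x.1 - 1, ?_, ?_⟩
    · exact shape_row S (lt_of_lt_of_le h2 h3) |>.imp id id
    · exact ⟨by omega, h2, h3⟩
  · rintro ⟨r, hr, hx1, hx2, hx3⟩
    have hx : x.1 - 1 = r := by omega
    rw [hx]
    exact ⟨by omega, hx2, hx3⟩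


lemma sum_tele (p q : Ptn) (i j : ℕ) (hij : i ≤ j)
    (hmid : ∀ r, i ≤ r → r < j → q.f r + 1 = p.f (r + 1))
    (hle : ∀ r, q.f r ≤ p.f r) :
    ∑ r ∈ Finset.Icc i j, (p.f r - q.f r) = (p.f i - q.f j) + (j - i) := by
  induction j with
  | zero =>
    have : i = 0 := Nat.le_zero.mp hij
    subst this; simp
  | succ j ih =>
    rcases eq_or_lt_of_le hij with h | h
    · rw [← h]; simp
    · have hij' : i ≤ j := by omega
      have hIcc : Finset.Icc i (j+1) = insert (j+1) (Finset.Icc i j) := by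
        ext x; simp [Finset.mem_Icc]; omega
      rw [hIcc, Finset.sum_insert (by simp), ih hij' (fun r h1 h2 => hmid r h1 (by omega))]
      have h1 := hmid j hij' (by omega)
      have h2 := hle (j+1)
      have h3 := p.antitone (show i ≤ j + 1 by omega)
      omega

lemma RFin_card {i j : ℕ} {p q : Ptn} (S : Shape i j p q) :
    (RFin i j p q).card = (p.f i - q.f j) + (j - i) := by
  have hdisj : ∀ r ∈ Finset.Icc i j, ∀ s ∈ Finset.Icc i j, r ≠ s →
      Disjoint ({r + 1} ×ˢ Finset.Ioc (q.f r) (p.f r))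
        ({s + 1} ×ˢ Finset.Ioc (q.f s) (p.f s)) := by
    intro r _ s _ hrs
    simp only [Finset.disjoint_left, Finset.mem_product, Finset.mem_singleton]
    rintro x ⟨hx1, _⟩ ⟨hx1', _⟩
    omega
  rw [RFin, Finset.card_biUnion hdisj]
  have hterm : ∀ r ∈ Finset.Icc i j,
      (({r + 1} ×ˢ Finset.Ioc (q.f r) (p.f r)).card) = p.f r - q.f r := by
    intro r _
    rw [Finset.card_product, Finset.card_singleton, Nat.card_Ioc, one_mul]
  rw [Finset.sum_congr rfl hterm]
  exact sum_tele p q i j S.hij S.hmid (shape_le S)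


lemma cellAdj_symm {x y : ℕ × ℕ} (h : cellAdj x y) : cellAdj y x := by
  unfold cellAdj at *; tauto

/-- Every removed cell reaches the bottom-left removed cell `(j+1, q.f j + 1)`. -/
lemma shape_reach {i j : ℕ} {p q : Ptn} (S : Shape i j p q) :
    ∀ n r c, j - r + c ≤ n → i ≤ r → r ≤ j → q.f r < c → c ≤ p.f r →
      Relation.ReflTransGen (fun u v => u ∈ RSet p q ∧ v ∈ RSet p q ∧ cellAdj u v)
        (r + 1, c) (j + 1, q.f j + 1) := by
  intro n
  induction n with
  | zero => intro r c h; omega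
  | succ n ih =>
    intro r c hn hir hrj hqc hcp
    have hmem : (r + 1, c) ∈ RSet p q := mem_RSet.mpr ⟨by omega, by simpa using hqc, by simpa using hcp⟩
    rcases Nat.lt_or_ge (q.f r + 1) c with hc | hc
    · -- move left
      have hmem' : (r + 1, c - 1) ∈ RSet p q :=
        mem_RSet.mpr ⟨by omega, by simp; omega, by simp; omega⟩
      have h1 : j - r + (c - 1) ≤ n := by omega
      have h2 : q.f r < c - 1 := by omega
      have h3 : c - 1 ≤ p.f r := by omega
      have hadj : cellAdj (r + 1, c) (r + 1, c - 1) := by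
        left; exact ⟨rfl, Or.inr (by omega)⟩
      exact Relation.ReflTransGen.head ⟨hmem, hmem', hadj⟩ (ih r (c - 1) h1 hir hrj h2 h3)
    · -- c = q.f r + 1
      have hceq : c = q.f r + 1 := by omega
      rcases eq_or_lt_of_le hrj with h | h
      · subst h; rw [hceq]
      · -- move down: c = p.f (r+1)
        have hmid := S.hmid r hir h
        have hne : q.f (r + 1) < p.f (r + 1) := shape_nonempty_row S (by omega) (by omega)
        have hmem' : (r + 2, c) ∈ RSet p q :=
          mem_RSet.mpr ⟨by omega, by simp; omega, by simp; omega⟩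
        refine Relation.ReflTransGen.head ⟨hmem, hmem', ?_⟩ ?_
        · right; exact ⟨rfl, Or.inl rfl⟩
        · exact ih (r + 1) c (by omega) (by omega) (by omega) (by omega) (by omega)

lemma shape_remHook {i j : ℕ} {p q : Ptn} (S : Shape i j p q) :
    RemHook ((p.f i - q.f j) + (j - i)) p q := by
  refine ⟨?_, ?_, ?_, ?_⟩
  · rintro r c ⟨h1, h2, h3⟩
    exact ⟨h1, h2, le_trans h3 (shape_le S _)⟩
  · rw [show {x : ℕ × ℕ | p.cell x.1 x.2 ∧ ¬ q.cell x.1 x.2} = RSet p q from rfl,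
      RSet_eq_RFin S, Set.ncard_coe_finset, RFin_card S]
  · intro x hp hq
    have hx : x ∈ RSet p q := ⟨hp, hq⟩
    rw [mem_RSet] at hx
    obtain ⟨h1, h2, h3⟩ := hx
    refine ⟨hp, ?_⟩
    rintro ⟨_, _, hc⟩
    set r := x.1 - 1 with hr
    have hrow : i ≤ r ∧ r ≤ j := shape_row S (lt_of_lt_of_le h2 h3)
    have hx1 : x.1 + 1 - 1 = r + 1 := by omega
    rw [hx1] at hc
    rcases eq_or_lt_of_le hrow.2 with h | h
    · subst h; have := S.hge; omega
    · have := S.hmid r hrow.1 h; omega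
  · intro x hx y hy
    have hx' := mem_RSet.mp hx
    have hy' := mem_RSet.mp hy
    obtain ⟨hx1, hx2, hx3⟩ := hx'
    obtain ⟨hy1, hy2, hy3⟩ := hy'
    have hxr := shape_row S (lt_of_lt_of_le hx2 hx3)
    have hyr := shape_row S (lt_of_lt_of_le hy2 hy3)
    have hxeq : x = (x.1 - 1 + 1, x.2) := by
      ext <;> simp <;> omega
    have hyeq : y = (y.1 - 1 + 1, y.2) := by
      ext <;> simp <;> omega
    have rx := shape_reach S (j - (x.1-1) + x.2) (x.1 - 1) x.2 le_rfl hxr.1 hxr.2 hx2 hx3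
    have ry := shape_reach S (j - (y.1-1) + y.2) (y.1 - 1) y.2 le_rfl hyr.1 hyr.2 hy2 hy3
    rw [← hxeq] at rx
    rw [← hyeq] at ry
    have hsymm : Symmetric (fun u v => u ∈ RSet p q ∧ v ∈ RSet p q ∧ cellAdj u v) := by
      rintro u v ⟨h1, h2, h3⟩; exact ⟨h2, h1, cellAdj_symm h3⟩
    exact rx.trans ((@Relation.ReflTransGen.stdSymm _ _ ⟨hsymm⟩).symm _ _ ry)


lemma shape_beta {i j : ℕ} {p q : Ptn} (a : ℤ) (S : Shape i j p q) :
    bnum a p i ∈ betaSet a p ∧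
    bnum a p i - (((p.f i - q.f j) + (j - i) : ℕ) : ℤ) ∉ betaSet a p ∧
    betaSet a q = insert (bnum a p i - (((p.f i - q.f j) + (j - i) : ℕ) : ℤ))
      (betaSet a p \ {bnum a p i}) := by
  set E : ℕ := (p.f i - q.f j) + (j - i) with hE
  have hpij : p.f j ≤ p.f i := p.antitone S.hij
  have hqj : q.f j < p.f j := S.hlast
  have hbj : bnum a q j = bnum a p i - (E : ℤ) := by
    simp only [bnum, hE]; push_cast [Nat.cast_sub (by omega : q.f j ≤ p.f i)]
    have := S.hij; push_cast; omega
  have hblt : ∀ r, r < i → bnum a q r = bnum a p r := by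
    intro r hr; simp only [bnum, S.hlt r hr]
  have hbmid : ∀ r, i ≤ r → r < j → bnum a q r = bnum a p (r + 1) := by
    intro r h1 h2
    have := S.hmid r h1 h2
    simp only [bnum]; push_cast; omega
  have hbgt : ∀ r, j < r → bnum a q r = bnum a p r := by
    intro r hr; simp only [bnum, S.hgt r hr]
  have hmono := bnum_strictAnti a p
  have hnot : bnum a p i - (E : ℤ) ∉ betaSet a p := by
    rw [betaSet_eq_range]
    rintro ⟨k, hk⟩
    rw [← hbj] at hk
    have h1 : bnum a q j < bnum a p j := by simp only [bnum]; omega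
    have h2 : bnum a p (j + 1) < bnum a q j := by
      have := S.hge; simp only [bnum]; push_cast; omega
    rcases le_or_gt k j with h | h
    · have := hmono.antitone h; omega
    · have := hmono.antitone (show j + 1 ≤ k by omega); omega
  have hij := S.hij
  refine ⟨⟨i, rfl⟩, hnot, ?_⟩
  rw [betaSet_eq_range, betaSet_eq_range]
  ext b
  simp only [Set.mem_insert_iff, Set.mem_diff, Set.mem_range, Set.mem_singleton_iff]
  constructor
  · rintro ⟨r, rfl⟩
    rcases lt_or_ge r i with h | h
    · right
      exact ⟨⟨r, (hblt r h).symm⟩, by rw [hblt r h]; exact fun hc => absurd (hmono.injective hc) (by omega)⟩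
    rcases lt_or_ge r j with h' | h'
    · right
      exact ⟨⟨r + 1, (hbmid r h h').symm⟩, by rw [hbmid r h h']; exact fun hc => absurd (hmono.injective hc) (by omega)⟩
    rcases eq_or_lt_of_le h' with h'' | h''
    · left; rw [show r = j from h''.symm]; exact hbj
    · right
      exact ⟨⟨r, (hbgt r h'').symm⟩, by rw [hbgt r h'']; exact fun hc => absurd (hmono.injective hc) (by omega)⟩
  · rintro (rfl | ⟨⟨k, rfl⟩, hk⟩)
    · exact ⟨j, hbj⟩
    · have hki : k ≠ i := fun hc => hk (by rw [hc])
      rcases lt_or_ge k i with h | h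
      · exact ⟨k, hblt k h⟩
      rcases le_or_gt k j with h' | h'
      · have hik : i < k := lt_of_le_of_ne h (Ne.symm hki)
        refine ⟨k - 1, ?_⟩
        rw [hbmid (k - 1) (by omega) (by omega)]
        congr 1; omega
      · exact ⟨k, hbgt k h'⟩


lemma cellAdj_row {u v : ℕ × ℕ} (h : cellAdj u v) : v.1 ≤ u.1 + 1 ∧ u.1 ≤ v.1 + 1 := by
  rcases h with ⟨h1, _⟩ | ⟨_, h2 | h2⟩ <;> omega

/-- Row intermediate value along a path. -/
lemma path_row_ivt {R : Set (ℕ × ℕ)} {x y : ℕ × ℕ} {m : ℕ}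
    (hx : x ∈ R)
    (hp : Relation.ReflTransGen (fun u v => u ∈ R ∧ v ∈ R ∧ cellAdj u v) x y)
    (h1 : x.1 ≤ m) (h2 : m ≤ y.1) : ∃ z ∈ R, z.1 = m := by
  induction hp with
  | refl => exact ⟨x, hx, by omega⟩
  | tail hab hbc ih =>
    rename_i b c
    rcases le_or_gt m b.1 with h | h
    · exact ih h
    · have := cellAdj_row hbc.2.2
      exact ⟨c, hbc.2.1, by omega⟩

/-- A vertical crossing step along a path. -/
lemma path_cross {R : Set (ℕ × ℕ)} {x y : ℕ × ℕ} {m : ℕ}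
    (hx : x ∈ R)
    (hp : Relation.ReflTransGen (fun u v => u ∈ R ∧ v ∈ R ∧ cellAdj u v) x y)
    (h1 : x.1 ≤ m) (h2 : m < y.1) : ∃ c, (m, c) ∈ R ∧ (m + 1, c) ∈ R := by
  induction hp with
  | refl => omega
  | tail hab hbc ih =>
    rename_i b c
    rcases lt_or_ge m b.1 with h | h
    · exact ih h
    · have hrow := cellAdj_row hbc.2.2
      have hb1 : b.1 = m := by omega
      have hc1 : c.1 = m + 1 := by omega
      have hcol : b.2 = c.2 := by
        rcases hbc.2.2 with ⟨he, _⟩ | ⟨he, _⟩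
        · omega
        · exact he
      refine ⟨b.2, ?_, ?_⟩
      · have : b = (m, b.2) := by ext <;> simp [hb1]
        rw [← this]; exact hbc.1
      · have : c = (m + 1, b.2) := by ext <;> simp [hc1, hcol.symm]
        rw [← this]; exact hbc.2.1

lemma remHook_shape {e : ℕ} {p q : Ptn} (he : 1 ≤ e) (H : RemHook e p q) :
    ∃ i j : ℕ, Shape i j p q := by
  obtain ⟨hsub, hcard, hrim, hconn⟩ := H
  have hle : ∀ r, q.f r ≤ p.f r := by
    intro r
    rcases Nat.eq_zero_or_pos (q.f r) with h | h
    · omega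
    · have := hsub (r + 1) (q.f r) ⟨by omega, h, by simp⟩
      simpa using this.2.2
  have hRR : {x : ℕ × ℕ | p.cell x.1 x.2 ∧ ¬ q.cell x.1 x.2} = RSet p q := rfl
  rw [hRR] at hcard hconn
  have hne : (RSet p q).Nonempty := by
    apply Set.nonempty_of_ncard_ne_zero; omega
  obtain ⟨N, hN⟩ := p.ev_zero
  have hDbound : ∀ r, q.f r < p.f r → r < N := by
    intro r hr
    by_contra hc
    push_neg at hc
    rw [hN r hc] at hr; omega
  set Dfin : Finset ℕ := (Finset.range N).filter (fun r => q.f r < p.f r) with hD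
  have hmemD : ∀ r, r ∈ Dfin ↔ q.f r < p.f r := by
    intro r
    simp only [hD, Finset.mem_filter, Finset.mem_range]
    exact ⟨fun h => h.2, fun h => ⟨hDbound r h, h⟩⟩
  have hDne : Dfin.Nonempty := by
    obtain ⟨x, hx⟩ := hne
    rw [mem_RSet] at hx
    exact ⟨x.1 - 1, (hmemD _).mpr (by omega)⟩
  set i := Dfin.min' hDne with hi
  set j := Dfin.max' hDne with hj
  have hiD : q.f i < p.f i := (hmemD i).mp (Dfin.min'_mem hDne)
  have hjD : q.f j < p.f j := (hmemD j).mp (Dfin.max'_mem hDne)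
  have hij : i ≤ j := Dfin.min'_le j ((hmemD j).mpr hjD)
  have hbounds : ∀ r, q.f r < p.f r → i ≤ r ∧ r ≤ j := by
    intro r hr
    exact ⟨Dfin.min'_le r ((hmemD r).mpr hr), Dfin.le_max' r ((hmemD r).mpr hr)⟩
  have houtside : ∀ r, (r < i ∨ j < r) → q.f r = p.f r := by
    intro r hr
    rcases lt_or_ge (q.f r) (p.f r) with h | h
    · have := hbounds r h; omega
    · have := hle r; omega
  -- endpoints in RSet
  have hxi : ((i + 1 : ℕ), p.f i) ∈ RSet p q := mem_RSet.mpr ⟨by omega, by simp; omega, by simp⟩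
  have hxj : ((j + 1 : ℕ), p.f j) ∈ RSet p q := mem_RSet.mpr ⟨by omega, by simp; omega, by simp⟩
  -- interval
  have hint : ∀ s, i ≤ s → s ≤ j → q.f s < p.f s := by
    intro s h1 h2
    obtain ⟨z, hz, hz1⟩ := path_row_ivt (m := s + 1) hxi (hconn _ hxi _ hxj)
      (by show i + 1 ≤ s + 1; omega) (by show s + 1 ≤ j + 1; omega)
    rw [mem_RSet] at hz
    have hs : z.1 - 1 = s := by omega
    rw [hs] at hz
    omega
  -- rim bound
  have hrim' : ∀ r, q.f r < p.f r → p.f (r + 1) ≤ q.f r + 1 := by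
    intro r hr
    have hx : ((r + 1 : ℕ), q.f r + 1) ∈ RSet p q := mem_RSet.mpr ⟨by omega, by simp, by simp; omega⟩
    have := (hrim _ hx.1 (fun hc => hx.2 hc)).2
    simp only [Ptn.cell, not_and, not_le] at this
    have h2 := this (by omega) (by omega)
    simp only [show r + 1 + 1 - 1 = r + 1 from rfl] at h2
    omega
  refine ⟨i, j, ⟨hij, fun r hr => houtside r (Or.inl hr), ?_, ?_, hjD, fun r hr => houtside r (Or.inr hr)⟩⟩
  · -- hmid
    intro r h1 h2
    have hrD : q.f r < p.f r := hint r h1 (by omega)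
    obtain ⟨c, hc1, hc2⟩ := path_cross hxi (hconn _ hxi _ hxj) (show (i+1 : ℕ) ≤ r + 1 by omega)
      (show r + 1 < j + 1 by omega)
    rw [mem_RSet] at hc1 hc2
    simp only at hc1 hc2
    have e1 : q.f r < c := by have := hc1.2.1; simpa using this
    have e2 : c ≤ p.f (r + 1) := by have := hc2.2.2; simpa using this
    have := hrim' r hrD
    omega
  · -- hge
    have := houtside (j + 1) (Or.inr (by omega))
    have := q.antitone (show j ≤ j + 1 by omega)
    omega


lemma bnum_gap (a : ℤ) (p : Ptn) {k l : ℕ} (h : k ≤ l) :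
    bnum a p l + ((l : ℤ) - k) ≤ bnum a p k := by
  have := p.antitone h
  simp only [bnum]; push_cast; omega

lemma remHook_congr {e : ℕ} {p q1 q2 : Ptn} (hf : ∀ r, q1.f r = q2.f r) :
    RemHook e p q1 → RemHook e p q2 := by
  have hcell : ∀ r c, q1.cell r c ↔ q2.cell r c := by
    intro r c; simp [Ptn.cell, hf]
  have hset : {x : ℕ × ℕ | p.cell x.1 x.2 ∧ ¬ q1.cell x.1 x.2} =
      {x : ℕ × ℕ | p.cell x.1 x.2 ∧ ¬ q2.cell x.1 x.2} := by
    ext x; simp [hcell]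
  rintro ⟨h1, h2, h3, h4⟩
  refine ⟨?_, ?_, ?_, ?_⟩
  · intro r c hc; exact h1 r c ((hcell r c).mpr hc)
  · rw [← hset]; exact h2
  · intro x hp hq; exact h3 x hp (fun hc => hq ((hcell _ _).mp hc))
  · rw [← hset]; exact h4

lemma construct {e : ℕ} (he : 1 ≤ e) {a b : ℤ} {p : Ptn} (hb : b ∈ betaSet a p)
    (hbe : b - (e : ℤ) ∉ betaSet a p) :
    ∃ (q' : Ptn) (i j : ℕ), Shape i j p q' ∧ (p.f i - q'.f j) + (j - i) = e ∧ b = bnum a p i := by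
  obtain ⟨i, hbi⟩ := hb
  have hbi : b = bnum a p i := hbi
  obtain ⟨N, hN⟩ := p.ev_zero
  obtain ⟨c0, hc0⟩ : ∃ c0 : ℕ, a - (b - e) ≤ (c0 : ℤ) := ⟨(a - (b - e)).toNat, Int.self_le_toNat _⟩
  set K : ℕ := N + c0 with hK
  have hKtail : ∀ k, K ≤ k → bnum a p k ≤ b - e := by
    intro k hk
    have h0 : p.f k = 0 := hN k (by omega)
    have h2 : (c0 : ℤ) ≤ k := by exact_mod_cast Nat.cast_le.mpr (by omega : c0 ≤ k)
    simp only [bnum, h0]; push_cast; omega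
  set Sfin : Finset ℕ := (Finset.range K).filter (fun k => b - e < bnum a p k) with hS
  have hmemS : ∀ k, k ∈ Sfin ↔ b - e < bnum a p k := by
    intro k
    simp only [hS, Finset.mem_filter, Finset.mem_range]
    refine ⟨fun h => h.2, fun h => ⟨?_, h⟩⟩
    by_contra hc
    push_neg at hc
    exact absurd h (not_lt.mpr (hKtail k hc))
  have hiS : i ∈ Sfin := (hmemS i).mpr (by rw [← hbi]; omega)
  have hSne : Sfin.Nonempty := ⟨i, hiS⟩
  set j := Sfin.max' hSne with hj
  have hjS : b - e < bnum a p j := (hmemS j).mp (Sfin.max'_mem hSne)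
  have hij : i ≤ j := Sfin.le_max' i hiS
  have hj1 : bnum a p (j + 1) < b - e := by
    have h1 : ¬ (b - e < bnum a p (j + 1)) := by
      intro hc
      have := Sfin.le_max' (j + 1) ((hmemS _).mpr hc)
      omega
    have h2 : bnum a p (j + 1) ≠ b - e := by
      intro hc; exact hbe ⟨j + 1, by rw [← hc]; rfl⟩
    omega
  have hmnn : 0 ≤ b - e - a + (j + 1 : ℕ) := by
    have : (0:ℤ) ≤ p.f (j+1) := by positivity
    simp only [bnum] at hj1; push_cast at hj1 ⊢; omega
  set m : ℕ := (b - e - a + (j + 1 : ℕ)).toNat with hmdef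
  have hm : (m : ℤ) = b - e - a + (j + 1 : ℕ) := Int.toNat_of_nonneg hmnn
  have hmltn : m < p.f j := by
    simp only [bnum] at hjS; push_cast at hjS hm ⊢; omega
  have hmgen : p.f (j + 1) ≤ m := by
    simp only [bnum] at hj1; push_cast at hj1 hm ⊢; omega
  have hfpos : ∀ r, i ≤ r → r < j → 1 ≤ p.f (r + 1) := by
    intro r h1 h2
    have g1 := bnum_gap a p (show r + 1 ≤ j by omega)
    have g2 : (0:ℤ) ≤ p.f (j + 1) := by positivity
    simp only [bnum] at g1 hjS hj1; push_cast at g1 hjS hj1 ⊢; omega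
  set g : ℕ → ℕ := fun r => if r < i then p.f r else if r < j then p.f (r + 1) - 1
    else if r = j then m else p.f r with hg
  have hgval1 : ∀ r, r < i → g r = p.f r := by
    intro r h; simp only [hg]; split_ifs <;> omega
  have hgval2 : ∀ r, i ≤ r → r < j → g r = p.f (r + 1) - 1 := by
    intro r h1 h2; simp only [hg]; split_ifs <;> omega
  have hgval3 : g j = m := by
    simp only [hg]; split_ifs <;> omega
  have hgval4 : ∀ r, j < r → g r = p.f r := by
    intro r h; simp only [hg]; split_ifs <;> omega
  have hg_succ : ∀ r, g (r + 1) ≤ g r := by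
    intro r
    rcases lt_trichotomy (r + 1) i with h1 | h1 | h1
    · rw [hgval1 _ h1, hgval1 _ (by omega)]
      exact p.antitone (by omega)
    · rw [hgval1 r (by omega), h1]
      rcases eq_or_lt_of_le hij with h2 | h2
      · rw [h2, hgval3]
        have := p.antitone (show r ≤ j by omega)
        omega
      · rw [hgval2 i le_rfl h2]
        have := p.antitone (show r ≤ i + 1 by omega)
        omega
    · have hir : i ≤ r := by omega
      rcases lt_trichotomy (r + 1) j with h2 | h2 | h2
      · rw [hgval2 r hir (by omega), hgval2 (r + 1) (by omega) h2]
        have := p.antitone (show r + 1 ≤ r + 1 + 1 by omega)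
        have := hfpos r hir (by omega)
        omega
      · rw [hgval2 r hir (by omega), h2, hgval3]
        omega
      · rcases eq_or_lt_of_le (show j ≤ r by omega) with h3 | h3
        · rw [← h3, hgval4 (j + 1) (by omega), hgval3]
          exact hmgen
        · rw [hgval4 r h3, hgval4 (r + 1) (by omega)]
          exact p.antitone (by omega)
  have hganti : Antitone g := antitone_nat_of_succ_le hg_succ
  set q' : Ptn := ⟨g, fun _ _ h => hganti h, ⟨max N (j + 1), fun r hr => by
    rw [hgval4 r (by omega)]; exact hN r (by omega)⟩⟩ with hq'
  have hq'f : ∀ r, q'.f r = g r := fun r => rfl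
  refine ⟨q', i, j, ⟨hij, ?_, ?_, ?_, ?_, ?_⟩, ?_, hbi⟩
  · intro r hr; rw [hq'f, hgval1 r hr]
  · intro r h1 h2
    rw [hq'f, hgval2 r h1 h2]
    have := hfpos r h1 h2
    omega
  · rw [hq'f, hgval3]; exact hmgen
  · rw [hq'f, hgval3]; exact hmltn
  · intro r hr; rw [hq'f, hgval4 r hr]
  · rw [hq'f, hgval3]
    have hpij : p.f j ≤ p.f i := p.antitone hij
    simp only [bnum] at hbi
    push_cast at hbi hm ⊢
    omega

end Stmt2

/-- removing an `e`-rim hook from `p` corresponds exactly to replacing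
a beta-number `b ∈ β_a(p)` with `b - e ∉ β_a(p)` by `b - e`. -/
theorem statement2 (e : ℕ) (he : 2 ≤ e) (a : ℤ) (p q : Ptn) :
    RemHook e p q ↔
      ∃ b ∈ betaSet a p, b - (e : ℤ) ∉ betaSet a p ∧
        betaSet a q = insert (b - (e : ℤ)) (betaSet a p \ {b}) := by
  constructor
  · intro H
    obtain ⟨i, j, S⟩ := Stmt2.remHook_shape (by omega) H
    have hE : (p.f i - q.f j) + (j - i) = e := by
      have h2 : (Stmt2.RSet p q).ncard = (p.f i - q.f j) + (j - i) := by
        rw [Stmt2.RSet_eq_RFin S, Set.ncard_coe_finset, Stmt2.RFin_card S]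
      have h1 := H.2.1
      rw [show {x : ℕ × ℕ | p.cell x.1 x.2 ∧ ¬ q.cell x.1 x.2} = Stmt2.RSet p q from rfl] at h1
      omega
    obtain ⟨hb1, hb2, hb3⟩ := Stmt2.shape_beta a S
    rw [hE] at hb2 hb3
    exact ⟨Stmt2.bnum a p i, hb1, hb2, hb3⟩
  · rintro ⟨b, hb, hbe, hbq⟩
    obtain ⟨q', i, j, S, hE, hbi⟩ := Stmt2.construct (by omega) hb hbe
    have H' := Stmt2.shape_remHook S
    rw [hE] at H'
    obtain ⟨hb1, hb2, hb3⟩ := Stmt2.shape_beta a S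
    rw [hE, ← hbi] at hb3
    have heq : betaSet a q' = betaSet a q := by rw [hb3, ← hbq]
    exact Stmt2.remHook_congr (Stmt2.betaSet_inj heq) H'
end

section
/- Let e ≥ 2 and let λ be a partition. Every maximal sequence of e-rim-hook removals from λ terminates at the same partition (the e-core of λ), and the number of hooks removed is the same for every such sequence; consequently |λ| = |core_e(λ)| + e·h(λ), where h(λ) is this common number of removed hooks (the e-weight). -/
namespace S4

open Relation Finset

/-- The beta sequence of a partition (charge 0): strictly decreasing. -/
def bet (p : Ptn) (i : ℕ) : ℤ := (p.f i : ℤ) - (i + 1)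

/-- The beta set. -/
def B (p : Ptn) : Set ℤ := Set.range (bet p)

lemma bet_lt {p : Ptn} {i j : ℕ} (h : i < j) : bet p j < bet p i := by
  have h1 : p.f j ≤ p.f i := p.antitone h.le
  simp only [bet]; omega

lemma bet_le {p : Ptn} {i j : ℕ} (h : i ≤ j) : bet p j ≤ bet p i := by
  rcases eq_or_lt_of_le h with rfl | h
  · exact le_rfl
  · exact (bet_lt h).le

lemma bet_inj {p : Ptn} {i j : ℕ} (h : bet p i = bet p j) : i = j := by
  rcases lt_trichotomy i j with h' | h' | h'
  · exact absurd h.symm (bet_lt h').ne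
  · exact h'
  · exact absurd h (bet_lt h').ne

lemma ptn_ext {p q : Ptn} (h : p.f = q.f) : p = q := by
  cases p; cases q; cases h; rfl

lemma mem_B {p : Ptn} {x : ℤ} : x ∈ B p ↔ ∃ i, bet p i = x := Iff.rfl

lemma B_le_aux {p q : Ptn} (h : B p ⊆ B q) (i : ℕ)
    (ih : ∀ k, k < i → bet p k = bet q k) : bet p i ≤ bet q i := by
  obtain ⟨m, hm⟩ : bet p i ∈ B q := h ⟨i, rfl⟩
  by_contra hlt
  push_neg at hlt
  have hmi : m < i := by
    by_contra hmi
    push_neg at hmi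
    have := bet_le (p := q) hmi
    omega
  have h2 := ih m hmi
  have : bet p m = bet p i := by omega
  exact absurd (bet_inj this) hmi.ne

lemma B_inj {p q : Ptn} (h : B p = B q) : p = q := by
  apply ptn_ext
  funext i
  have key : ∀ i, bet p i = bet q i := by
    intro i
    induction i using Nat.strong_induction_on with
    | _ i ih =>
      have h1 := B_le_aux h.le i ih
      have h2 := B_le_aux h.ge i (fun k hk => (ih k hk).symm)
      omega
  have := key i
  simp only [bet] at this
  omega

end S4

namespace S4

def cells (p : Ptn) : Set (ℕ × ℕ) := {x | p.cell x.1 x.2}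

lemma cells_finite (p : Ptn) : (cells p).Finite := by
  obtain ⟨N, hN⟩ := p.ev_zero
  apply Set.Finite.subset (Set.finite_Icc ((1 : ℕ), (1 : ℕ)) (N, p.f 0))
  rintro ⟨a, c⟩ ⟨ha, hc, hcf⟩
  dsimp only at ha hc hcf
  have h1 : c ≤ p.f 0 := le_trans hcf (p.antitone (Nat.zero_le _))
  have h2 : a ≤ N := by
    by_contra hN'
    push_neg at hN'
    have := hN (a - 1) (by omega)
    omega
  simp only [Set.mem_Icc, Prod.mk_le_mk]
  exact ⟨⟨ha, hc⟩, h2, h1⟩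

/-- q-to-p column bounds. -/
lemma fle_of_sub {p q : Ptn} (hsub : ∀ r c, q.cell r c → p.cell r c) (i : ℕ) :
    q.f i ≤ p.f i := by
  rcases Nat.eq_zero_or_pos (q.f i) with h | h
  · omega
  · have := hsub (i + 1) (q.f i) ⟨by omega, h, by simpa using le_rfl⟩
    simpa using this.2.2

lemma memH_iff {p q : Ptn} (a c : ℕ) :
    (p.cell a c ∧ ¬ q.cell a c) ↔ ∃ i, a = i + 1 ∧ q.f i < c ∧ c ≤ p.f i := by
  constructor
  · rintro ⟨⟨h1, h2, h3⟩, h4⟩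
    refine ⟨a - 1, by omega, ?_, by omega⟩
    by_contra h5
    push_neg at h5
    exact h4 ⟨h1, h2, by omega⟩
  · rintro ⟨i, rfl, h1, h2⟩
    have : 1 ≤ c := by omega
    refine ⟨⟨by omega, this, by simpa using h2⟩, ?_⟩
    rintro ⟨_, _, h3⟩
    simp only [Nat.add_sub_cancel] at h3
    omega

/-- The removed set as a finset of rows of intervals. -/
def hookFinset (p q : Ptn) (r s : ℕ) : Finset (ℕ × ℕ) :=
  (Finset.Icc r s).biUnion fun i => (Finset.Ioc (q.f i) (p.f i)).image fun c => (i + 1, c)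

lemma H_row {p q : Ptn} {r s : ℕ}
    (hD : ∀ i, q.f i < p.f i ↔ (r ≤ i ∧ i ≤ s)) :
    {x : ℕ × ℕ | p.cell x.1 x.2 ∧ ¬ q.cell x.1 x.2} = ↑(hookFinset p q r s) := by
  ext ⟨a, c⟩
  simp only [Set.mem_setOf_eq, hookFinset, Finset.coe_biUnion, Finset.mem_coe,
    Finset.mem_Icc, Set.mem_iUnion, Finset.mem_image, Finset.mem_Ioc, Prod.mk.injEq]
  rw [memH_iff]
  constructor
  · rintro ⟨i, rfl, h1, h2⟩
    exact ⟨i, (hD i).1 (by omega), c, ⟨h1, h2⟩, rfl, rfl⟩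
  · rintro ⟨i, _, c', ⟨h1, h2⟩, rfl, rfl⟩
    exact ⟨i, rfl, h1, h2⟩

lemma hookFinset_card (p q : Ptn) (r s : ℕ) :
    (hookFinset p q r s).card = ∑ i ∈ Finset.Icc r s, (p.f i - q.f i) := by
  rw [hookFinset, Finset.card_biUnion]
  · refine Finset.sum_congr rfl fun i _ => ?_
    rw [Finset.card_image_of_injective _ (fun a b h => by simpa using h)]
    exact Nat.card_Ioc _ _
  · intro i _ j _ hij
    simp only [Finset.disjoint_left, Finset.mem_image, Finset.mem_Ioc]
    rintro ⟨a, c⟩ ⟨c1, _, h1, h2⟩ ⟨c2, _, h3, h4⟩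
    omega

/-- Telescoping sum over hook rows. -/
lemma tele {P Q : ℕ → ℕ} {r s : ℕ} (hrs : r ≤ s)
    (ht : ∀ i, r ≤ i → i < s → Q i + 1 = P (i + 1)) :
    (∑ i ∈ Finset.Icc r s, ((P i : ℤ) - Q i)) = (P r : ℤ) - Q s + ((s : ℤ) - r) := by
  induction s, hrs using Nat.le_induction with
  | base => simp
  | succ s hrs ih =>
    rw [Finset.sum_Icc_succ_top (by omega)]
    rw [ih (fun i h1 h2 => ht i h1 (by omega))]
    have := ht s hrs (by omega)
    push_cast
    omega

lemma cast_sum_sub {P Q : ℕ → ℕ} {r s : ℕ} (hle : ∀ i, Q i ≤ P i) :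
    ((∑ i ∈ Finset.Icc r s, (P i - Q i) : ℕ) : ℤ)
      = ∑ i ∈ Finset.Icc r s, ((P i : ℤ) - Q i) := by
  rw [Nat.cast_sum]
  exact Finset.sum_congr rfl fun i _ => by
    have := hle i; push_cast [Nat.cast_sub this]; ring

end S4

namespace S4

def stepH (H : Set (ℕ × ℕ)) : (ℕ × ℕ) → (ℕ × ℕ) → Prop :=
  fun u v => u ∈ H ∧ v ∈ H ∧ cellAdj u v

lemma cellAdj_row {u v : ℕ × ℕ} (h : cellAdj u v) : v.1 ≤ u.1 + 1 ∧ u.1 ≤ v.1 + 1 := by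
  rcases h with ⟨h, _⟩ | ⟨_, h | h⟩ <;> omega

lemma cellAdj_symm {u v : ℕ × ℕ} (h : cellAdj u v) : cellAdj v u := by
  rcases h with ⟨h1, h2 | h2⟩ | ⟨h1, h2 | h2⟩
  exacts [Or.inl ⟨h1.symm, Or.inr h2⟩, Or.inl ⟨h1.symm, Or.inl h2⟩,
    Or.inr ⟨h1.symm, Or.inr h2⟩, Or.inr ⟨h1.symm, Or.inl h2⟩]

lemma stepH_symm {H : Set (ℕ × ℕ)} : Symmetric (stepH H) :=
  fun _ _ h => ⟨h.2.1, h.1, cellAdj_symm h.2.2⟩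

lemma path_row_hit {H : Set (ℕ × ℕ)} {x y : ℕ × ℕ}
    (hpath : Relation.ReflTransGen (stepH H) x y) (hx : x ∈ H)
    {m : ℕ} (h1 : x.1 ≤ m) (h2 : m ≤ y.1) : ∃ z ∈ H, z.1 = m := by
  induction hpath using Relation.ReflTransGen.head_induction_on with
  | refl => exact ⟨y, hx, by omega⟩
  | head hac hcy ih =>
    rename_i a c
    rcases Nat.eq_or_lt_of_le h1 with heq | hlt
    · exact ⟨a, hac.1, heq⟩
    · have hr := cellAdj_row hac.2.2
      exact ih hac.2.1 (by omega)

lemma path_cross {H : Set (ℕ × ℕ)} {x y : ℕ × ℕ}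
    (hpath : Relation.ReflTransGen (stepH H) x y) (hx : x ∈ H)
    {m : ℕ} (h1 : x.1 ≤ m) (h2 : m < y.1) :
    ∃ u v : ℕ × ℕ, u ∈ H ∧ v ∈ H ∧ cellAdj u v ∧ u.1 = m ∧ v.1 = m + 1 := by
  induction hpath using Relation.ReflTransGen.head_induction_on with
  | refl => omega
  | head hac hcy ih =>
    rename_i a c
    have hr := cellAdj_row hac.2.2
    rcases le_or_gt c.1 m with hc | hc
    · exact ih hac.2.1 hc
    · exact ⟨a, c, hac.1, hac.2.1, hac.2.2, by omega, by omega⟩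

lemma memH_iff' {p q : Ptn} {a c : ℕ} :
    (a, c) ∈ {x : ℕ × ℕ | p.cell x.1 x.2 ∧ ¬ q.cell x.1 x.2} ↔
      ∃ i, a = i + 1 ∧ q.f i < c ∧ c ≤ p.f i := memH_iff a c

lemma conn_rows {p q : Ptn} {r s : ℕ} (hrs : r ≤ s)
    (hD : ∀ i, q.f i < p.f i ↔ (r ≤ i ∧ i ≤ s))
    (hcross : ∀ i, r ≤ i → i < s → q.f i < p.f (i + 1)) :
    ConnSet {x : ℕ × ℕ | p.cell x.1 x.2 ∧ ¬ q.cell x.1 x.2} := by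
  set H : Set (ℕ × ℕ) := {x : ℕ × ℕ | p.cell x.1 x.2 ∧ ¬ q.cell x.1 x.2} with hHdef
  have hmem : ∀ i c, r ≤ i → i ≤ s → q.f i < c → c ≤ p.f i → (i + 1, c) ∈ H :=
    fun i c _ _ h3 h4 => memH_iff'.2 ⟨i, rfl, h3, h4⟩
  have horiz : ∀ n i c, r ≤ i → i ≤ s → q.f i < c → c ≤ p.f i → c = q.f i + 1 + n →
      Relation.ReflTransGen (stepH H) (i + 1, c) (i + 1, q.f i + 1) := by
    intro n
    induction n with
    | zero =>
      intro i c _ _ _ _ h5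
      rw [show c = q.f i + 1 by omega]
    | succ n ih =>
      intro i c h1 h2 h3 h4 h5
      have hstep : stepH H (i + 1, c) (i + 1, c - 1) :=
        ⟨hmem i c h1 h2 h3 h4, hmem i (c - 1) h1 h2 (by omega) (by omega),
          Or.inl ⟨rfl, Or.inr (by simp; omega)⟩⟩
      exact Relation.ReflTransGen.head hstep
        (ih i (c - 1) h1 h2 (by omega) (by omega) (by omega))
  have down : ∀ n i, r ≤ i → i ≤ s → s - i = n →
      Relation.ReflTransGen (stepH H) (i + 1, q.f i + 1) (s + 1, q.f s + 1) := by
    intro n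
    induction n with
    | zero =>
      intro i h1 h2 h3
      rw [show i = s by omega]
    | succ n ih =>
      intro i h1 h2 h3
      have his : i < s := by omega
      have hne : q.f i < p.f i := (hD i).2 ⟨h1, h2⟩
      have hne' : q.f (i + 1) < p.f (i + 1) := (hD (i + 1)).2 ⟨by omega, by omega⟩
      have hq : q.f (i + 1) ≤ q.f i := q.antitone (by omega)
      have hc : q.f i + 1 ≤ p.f (i + 1) := hcross i h1 his
      have hstep : stepH H (i + 1, q.f i + 1) (i + 1 + 1, q.f i + 1) :=
        ⟨hmem i (q.f i + 1) h1 h2 (by omega) (by omega),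
          hmem (i + 1) (q.f i + 1) (by omega) (by omega) (by omega) hc,
          Or.inr ⟨rfl, Or.inl rfl⟩⟩
      refine Relation.ReflTransGen.head hstep (Relation.ReflTransGen.trans ?_
        (ih (i + 1) (by omega) (by omega) (by omega)))
      exact horiz (q.f i - q.f (i + 1)) (i + 1) (q.f i + 1) (by omega) (by omega)
        (by omega) hc (by omega)
  have toCan : ∀ x ∈ H, Relation.ReflTransGen (stepH H) x (s + 1, q.f s + 1) := by
    rintro ⟨a, c⟩ hx
    obtain ⟨i, rfl, h1, h2⟩ := memH_iff'.1 hx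
    have hi : r ≤ i ∧ i ≤ s := (hD i).1 (by omega)
    exact Relation.ReflTransGen.trans
      (horiz (c - (q.f i + 1)) i c hi.1 hi.2 h1 h2 (by omega))
      (down (s - i) i hi.1 hi.2 rfl)
  intro x hx y hy
  exact Relation.ReflTransGen.trans (toCan x hx)
    (by
      have h := toCan y hy
      generalize (s + 1, q.f s + 1) = z at h ⊢
      induction h with
      | refl => exact Relation.ReflTransGen.refl
      | tail _ hbc ih => exact Relation.ReflTransGen.head (stepH_symm hbc) ih)

end S4

namespace S4

lemma B_move {e : ℕ} (he : 1 ≤ e) {p q : Ptn} {r s : ℕ} {x : ℤ} (hrs : r ≤ s)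
    (hx : bet p r = x)
    (h1 : ∀ i, i < r → bet q i = bet p i)
    (h2 : ∀ i, r ≤ i → i < s → bet q i = bet p (i + 1))
    (h3 : bet q s = x - e)
    (h4 : ∀ i, s < i → bet q i = bet p i) :
    x ∈ B p ∧ (x - e) ∉ B p ∧ B q = insert (x - e) (B p \ {x}) := by
  have he' : (1 : ℤ) ≤ e := by exact_mod_cast he
  have hxB : x ∈ B p := ⟨r, hx⟩
  have hlt : x - e < bet p s := by
    rcases eq_or_lt_of_le hrs with rfl | h
    · omega
    · have e1 := h2 (s - 1) (by omega) (by omega)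
      have e2 := bet_lt (p := q) (show s - 1 < s by omega)
      rw [show s - 1 + 1 = s by omega] at e1
      omega
  have hgt : bet p (s + 1) < x - e := by
    have e1 := h4 (s + 1) (by omega)
    have e2 := bet_lt (p := q) (show s < s + 1 by omega)
    omega
  have hnotin : (x - e) ∉ B p := by
    rintro ⟨j, hj⟩
    rcases le_or_gt j s with h | h
    · have := bet_le (p := p) h; omega
    · have := bet_le (p := p) (show s + 1 ≤ j by omega); omega
  refine ⟨hxB, hnotin, ?_⟩
  ext z
  simp only [B, Set.mem_insert_iff, Set.mem_diff, Set.mem_singleton_iff, Set.mem_range]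
  constructor
  · rintro ⟨i, rfl⟩
    rcases lt_or_ge i r with h | h
    · refine Or.inr ⟨⟨i, (h1 i h).symm⟩, fun hc => ?_⟩
      rw [h1 i h, ← hx] at hc
      exact absurd (bet_inj hc) (by omega)
    · rcases lt_or_ge i s with h' | h'
      · refine Or.inr ⟨⟨i + 1, (h2 i h h').symm⟩, fun hc => ?_⟩
        rw [h2 i h h', ← hx] at hc
        have := bet_inj hc
        omega
      · rcases eq_or_lt_of_le h' with rfl | h''
        · exact Or.inl h3
        · refine Or.inr ⟨⟨i, (h4 i h'').symm⟩, fun hc => ?_⟩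
          rw [h4 i h'', ← hx] at hc
          have := bet_inj hc
          omega
  · rintro (rfl | ⟨⟨j, rfl⟩, hne⟩)
    · exact ⟨s, h3⟩
    · have hjr : j ≠ r := fun hc => hne (by rw [hc, hx])
      rcases lt_or_ge j r with h | h
      · exact ⟨j, h1 j h⟩
      · rcases le_or_gt j s with h' | h'
        · refine ⟨j - 1, ?_⟩
          rw [h2 (j - 1) (by omega) (by omega), show j - 1 + 1 = j by omega]
        · exact ⟨j, h4 j h'⟩

lemma remhook_beta {e : ℕ} (he : 1 ≤ e) {p q : Ptn} (hk : RemHook e p q) :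
    ∃ x : ℤ, x ∈ B p ∧ (x - e) ∉ B p ∧ B q = insert (x - e) (B p \ {x}) := by
  obtain ⟨hsub, hcard, hrim, hconn⟩ := hk
  have hQP : ∀ i, q.f i ≤ p.f i := fle_of_sub hsub
  have hrim' : ∀ i c, q.f i < c → c ≤ p.f i → p.f (i + 1) ≤ c := by
    intro i c hqc hcp
    have hcell : p.cell (i + 1) c ∧ ¬ q.cell (i + 1) c :=
      (memH_iff (p := p) (q := q) (i + 1) c).2 ⟨i, rfl, hqc, hcp⟩
    have hr := (hrim (i + 1, c) hcell.1 hcell.2).2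
    by_contra hno
    push_neg at hno
    exact hr ⟨by omega, by omega, by simpa using (by omega : c + 1 ≤ p.f (i + 1))⟩
  -- the set of removed rows is nonempty and bounded
  have hne : {x : ℕ × ℕ | p.cell x.1 x.2 ∧ ¬ q.cell x.1 x.2}.Nonempty :=
    Set.nonempty_of_ncard_ne_zero (by omega)
  obtain ⟨⟨a₀, c₀⟩, hx₀⟩ := hne
  obtain ⟨i₀, rfl, hi₁, hi₂⟩ := memH_iff'.1 hx₀
  have hi₀ : q.f i₀ < p.f i₀ := by omega
  obtain ⟨N, hN⟩ := p.ev_zero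
  have hbound : ∀ i, q.f i < p.f i → i < N := by
    intro i hi
    by_contra hc
    push_neg at hc
    have := hN i hc
    omega
  have hex : ∃ i, q.f i < p.f i := ⟨i₀, hi₀⟩
  set r := Nat.find hex with hrdef
  have hr : q.f r < p.f r := Nat.find_spec hex
  set s := Nat.findGreatest (fun i => q.f i < p.f i) N with hsdef
  have hs : q.f s < p.f s :=
    Nat.findGreatest_spec (P := fun i => q.f i < p.f i) (hbound i₀ hi₀).le hi₀
  have hsmax : ∀ j, s < j → ¬ q.f j < p.f j := by
    intro j hj hc
    rcases le_or_gt j N with h | h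
    · exact absurd hc (Nat.findGreatest_is_greatest (P := fun i => q.f i < p.f i) hj h)
    · have := hN j h.le
      omega
  have hrs : r ≤ s := Nat.find_min' hex hs
  -- all rows between r and s are removed rows (via connectivity)
  have hint : ∀ i, r ≤ i → i ≤ s → q.f i < p.f i := by
    intro i h1 h2
    have hxr : (r + 1, q.f r + 1) ∈ {x : ℕ × ℕ | p.cell x.1 x.2 ∧ ¬ q.cell x.1 x.2} :=
      memH_iff'.2 ⟨r, rfl, by omega, by omega⟩
    have hys : (s + 1, q.f s + 1) ∈ {x : ℕ × ℕ | p.cell x.1 x.2 ∧ ¬ q.cell x.1 x.2} :=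
      memH_iff'.2 ⟨s, rfl, by omega, by omega⟩
    obtain ⟨⟨a, c⟩, hz, hz1⟩ :=
      path_row_hit (hconn _ hxr _ hys) hxr (m := i + 1) (by simp; omega) (by simp; omega)
    obtain ⟨j, hj, hj1, hj2⟩ := memH_iff'.1 hz
    have ha : a = i + 1 := hz1
    have : j = i := by omega
    subst this
    omega
  have hD : ∀ i, q.f i < p.f i ↔ (r ≤ i ∧ i ≤ s) := by
    intro i
    refine ⟨fun h => ⟨Nat.find_min' hex h, ?_⟩, fun h => hint i h.1 h.2⟩
    by_contra hc
    push_neg at hc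
    exact hsmax i hc h
  -- consecutive rows: q.f i + 1 = p.f (i+1)
  have htel : ∀ i, r ≤ i → i < s → q.f i + 1 = p.f (i + 1) := by
    intro i h1 h2
    have hii : q.f i < p.f i := hint i h1 (by omega)
    have hii' : q.f (i + 1) < p.f (i + 1) := hint (i + 1) (by omega) (by omega)
    have hle : p.f (i + 1) ≤ q.f i + 1 := hrim' i (q.f i + 1) (by omega) (by omega)
    have hxr : (i + 1, q.f i + 1) ∈ {x : ℕ × ℕ | p.cell x.1 x.2 ∧ ¬ q.cell x.1 x.2} :=
      memH_iff'.2 ⟨i, rfl, by omega, by omega⟩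
    have hys : (i + 2, q.f (i + 1) + 1) ∈ {x : ℕ × ℕ | p.cell x.1 x.2 ∧ ¬ q.cell x.1 x.2} :=
      memH_iff'.2 ⟨i + 1, rfl, by omega, by omega⟩
    obtain ⟨u, v, hu, hv, hadj, hu1, hv1⟩ :=
      path_cross (hconn _ hxr _ hys) hxr (m := i + 1) (by simp) (by simp)
    obtain ⟨u1, u2⟩ := u
    obtain ⟨v1, v2⟩ := v
    have hu1' : u1 = i + 1 := hu1
    have hv1' : v1 = i + 2 := hv1
    obtain ⟨ju, hju, hju1, hju2⟩ := memH_iff'.1 hu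
    obtain ⟨jv, hjv, hjv1, hjv2⟩ := memH_iff'.1 hv
    have hju' : ju = i := by omega
    have hjv' : jv = i + 1 := by omega
    subst hju' hjv'
    have hcol : u2 = v2 := by
      rcases hadj with ⟨h, _⟩ | ⟨h, _⟩
      · have : u1 = v1 := h; omega
      · exact h
    omega
  have houts : ∀ i, i < r ∨ s < i → q.f i = p.f i := by
    intro i hi
    have := hQP i
    rcases hi with h | h
    · have := Nat.find_min hex h
      omega
    · have := hsmax i h
      omega
  -- counting
  have hcount : ((p.f r : ℤ)) - q.f s + ((s : ℤ) - r) = e := by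
    have h1 : {x : ℕ × ℕ | p.cell x.1 x.2 ∧ ¬ q.cell x.1 x.2} = ↑(hookFinset p q r s) :=
      H_row hD
    rw [h1, Set.ncard_coe_finset, hookFinset_card] at hcard
    have h2 := cast_sum_sub (r := r) (s := s) hQP
    rw [hcard] at h2
    rw [tele hrs (fun i a b => htel i a b)] at h2
    omega
  refine ⟨bet p r, ?_⟩
  exact B_move (e := e) (q := q) he hrs rfl
    (fun i hi => by have := houts i (Or.inl hi); simp only [bet]; omega)
    (fun i hi1 hi2 => by have := htel i hi1 hi2; simp only [bet]; omega)
    (by simp only [bet]; omega)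
    (fun i hi => by have := houts i (Or.inr hi); simp only [bet]; omega)

end S4

namespace S4

lemma beta_remhook {e : ℕ} (he : 1 ≤ e) {p : Ptn} {x : ℤ}
    (hx : x ∈ B p) (hxe : (x - e) ∉ B p) :
    ∃ q : Ptn, RemHook e p q ∧ B q = insert (x - e) (B p \ {x}) := by
  obtain ⟨r, hr⟩ := hx
  have he' : (1 : ℤ) ≤ e := by exact_mod_cast he
  -- find the last row s of the hook
  have hex : ∃ j, bet p (j + 1) < x - e := by
    refine ⟨p.f 0 + r + e, ?_⟩
    have hA : p.f (p.f 0 + r + e + 1) ≤ p.f 0 := p.antitone (Nat.zero_le _)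
    have hB : (p.f r : ℤ) - (r + 1) = x := hr
    simp only [bet]
    push_cast
    omega
  set s := Nat.find hex with hsdef
  have hs1 : bet p (s + 1) < x - e := Nat.find_spec hex
  have hrs : r ≤ s := by
    by_contra h
    push_neg at h
    have := bet_le (p := p) (show s + 1 ≤ r by omega)
    omega
  have hbig : ∀ i, r ≤ i → i ≤ s → x - e < bet p i := by
    intro i h1 h2
    rcases eq_or_lt_of_le h1 with rfl | h
    · omega
    · have h3 := Nat.find_min hex (show i - 1 < s by omega)
      push_neg at h3
      rw [show i - 1 + 1 = i by omega] at h3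
      have : bet p i ≠ x - e := fun hc => hxe ⟨i, hc⟩
      omega
  -- numeric facts
  have hQsnn : 0 ≤ x - e + s + 1 := by
    have : (0 : ℤ) ≤ p.f (s + 1) := by positivity
    simp only [bet] at hs1
    omega
  set Qs : ℕ := (x - e + s + 1).toNat with hQsdef
  have hQs : (Qs : ℤ) = x - e + s + 1 := Int.toNat_of_nonneg hQsnn
  have hPs : x - e + s + 1 < p.f s := by
    have := hbig s hrs le_rfl
    simp only [bet] at this
    omega
  have hPsge : Qs < p.f s := by omega
  have hPs1le : p.f (s + 1) ≤ Qs := by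
    simp only [bet] at hs1
    omega
  have hP1 : ∀ i, r ≤ i → i < s → 1 ≤ p.f (i + 1) := by
    intro i h1 h2
    have := p.antitone (show i + 1 ≤ s by omega)
    omega
  -- the new partition
  set Q : ℕ → ℕ := fun i =>
    if i < r then p.f i else if i < s then p.f (i + 1) - 1
    else if i = s then Qs else p.f i with hQdef
  have hQlt : ∀ i, i < r → Q i = p.f i := by
    intro i h; simp only [hQdef, if_pos h]
  have hQmid : ∀ i, r ≤ i → i < s → Q i = p.f (i + 1) - 1 := by
    intro i h1 h2; simp only [hQdef, if_neg (by omega : ¬ i < r), if_pos h2]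
  have hQs' : Q s = Qs := by
    simp only [hQdef]
    rw [if_neg (by omega : ¬ s < r), if_neg (lt_irrefl s)]
    simp
  have hQgt : ∀ i, s < i → Q i = p.f i := by
    intro i h
    simp only [hQdef, if_neg (by omega : ¬ i < r), if_neg (by omega : ¬ i < s),
      if_neg (by omega : ¬ i = s)]
  have hmono : ∀ i, Q (i + 1) ≤ Q i := by
    intro i
    rcases lt_or_ge (i + 1) r with h1 | h1
    · rw [hQlt _ h1, hQlt _ (by omega)]
      exact p.antitone (by omega)
    rcases lt_or_ge i s with h2 | h2
    · rcases lt_or_ge i r with h3 | h3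
      · rw [hQlt _ h3]
        rcases lt_or_ge (i + 1) s with h4 | h4
        · have hv := hQmid (i + 1) h1 h4
          have := p.antitone (show i ≤ i + 1 + 1 by omega)
          omega
        · have h5 : i + 1 = s := by omega
          rw [h5, hQs']
          have := p.antitone (show i ≤ s by omega)
          omega
      · have hQi := hQmid i h3 h2
        rcases lt_or_ge (i + 1) s with h4 | h4
        · have hQi1 := hQmid (i + 1) (by omega) h4
          have := p.antitone (show i + 1 ≤ i + 1 + 1 by omega)
          omega
        · have h5 : i + 1 = s := by omega
          rw [h5] at hQi ⊢
          rw [hQs']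
          omega
    · rcases eq_or_lt_of_le h2 with h3 | h3
      · subst h3
        rw [hQs', hQgt _ (by omega)]
        omega
      · rw [hQgt _ h3, hQgt _ (by omega)]
        exact p.antitone (by omega)
  have hQP : ∀ i, Q i ≤ p.f i := by
    intro i
    rcases lt_or_ge i r with h | h
    · rw [hQlt _ h]
    rcases lt_or_ge i s with h2 | h2
    · have := hQmid i h h2
      have := p.antitone (show i ≤ i + 1 by omega)
      omega
    rcases eq_or_lt_of_le h2 with h3 | h3
    · subst h3; rw [hQs']; omega
    · rw [hQgt _ h3]
  obtain ⟨N, hN⟩ := p.ev_zero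
  set q : Ptn := ⟨Q, antitone_nat_of_succ_le hmono, ⟨max N (s + 1), fun i hi => by
    rw [hQgt _ (by omega)]
    exact hN i (by omega)⟩⟩ with hqdef
  have hqf : ∀ i, q.f i = Q i := fun i => rfl
  -- removed rows are exactly [r, s]
  have hD : ∀ i, q.f i < p.f i ↔ (r ≤ i ∧ i ≤ s) := by
    intro i
    rw [hqf]
    constructor
    · intro h
      constructor
      · by_contra hc; push_neg at hc; rw [hQlt _ hc] at h; omega
      · by_contra hc; push_neg at hc; rw [hQgt _ hc] at h; omega
    · rintro ⟨h1, h2⟩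
      rcases lt_or_ge i s with h3 | h3
      · have := hQmid i h1 h3
        have := hP1 i h1 h3
        have := p.antitone (show i ≤ i + 1 by omega)
        omega
      · have h4 : i = s := by omega
        subst h4
        rw [hQs']
        omega
  have htel : ∀ i, r ≤ i → i < s → q.f i + 1 = p.f (i + 1) := by
    intro i h1 h2
    rw [hqf, hQmid i h1 h2]
    have := hP1 i h1 h2
    omega
  refine ⟨q, ⟨?_, ?_, ?_, ?_⟩, ?_⟩
  · -- subset
    rintro a c ⟨h1, h2, h3⟩
    exact ⟨h1, h2, le_trans h3 (hQP _)⟩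
  · -- cardinality
    have h1 : {z : ℕ × ℕ | p.cell z.1 z.2 ∧ ¬ q.cell z.1 z.2} = ↑(hookFinset p q r s) :=
      H_row hD
    rw [h1, Set.ncard_coe_finset, hookFinset_card]
    have h2 := cast_sum_sub (P := p.f) (Q := q.f) (r := r) (s := s) (fun i => by rw [hqf]; exact hQP i)
    rw [tele hrs htel] at h2
    have h3 : (q.f s : ℤ) = Qs := by rw [hqf, hQs']
    have h4 : (p.f r : ℤ) = x + r + 1 := by
      have : (p.f r : ℤ) - (r + 1) = x := hr
      omega
    have : ((∑ i ∈ Finset.Icc r s, (p.f i - q.f i) : ℕ) : ℤ) = e := by omega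
    exact_mod_cast this
  · -- rim
    rintro ⟨a, c⟩ hp hq
    obtain ⟨i, rfl, h1, h2⟩ := (memH_iff a c).1 ⟨hp, hq⟩
    rw [hqf] at h1
    have hi : r ≤ i ∧ i ≤ s := (hD i).1 (by rw [hqf]; omega)
    refine ⟨hp, ?_⟩
    rintro ⟨_, _, h3⟩
    simp only [Nat.add_sub_cancel] at h3
    rcases lt_or_ge i s with h4 | h4
    · have := hQmid i hi.1 h4
      have := hP1 i hi.1 h4
      omega
    · have h5 : i = s := by omega
      subst h5
      rw [hQs'] at h1
      omega
  · -- connectivity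
    refine conn_rows hrs hD ?_
    intro i h1 h2
    rw [hqf, hQmid i h1 h2]
    have := hP1 i h1 h2
    omega
  · -- beta set
    refine (B_move (e := e) (q := q) he hrs hr ?_ ?_ ?_ ?_).2.2
    · intro i hi
      simp only [bet, hqf, hQlt _ hi]
    · intro i hi1 hi2
      have := hQmid i hi1 hi2
      have := hP1 i hi1 hi2
      simp only [bet, hqf]
      omega
    · simp only [bet, hqf, hQs']
      omega
    · intro i hi
      simp only [bet, hqf, hQgt _ hi]

end S4

namespace S4

lemma remhook_size {e : ℕ} {p q : Ptn} (hk : RemHook e p q) : p.size = q.size + e := by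
  have hsubc : cells q ⊆ cells p := fun z hz => hk.1 z.1 z.2 hz
  have hd := Set.ncard_diff_add_ncard_of_subset hsubc (cells_finite p)
  have hdiff : cells p \ cells q = {z : ℕ × ℕ | p.cell z.1 z.2 ∧ ¬ q.cell z.1 z.2} := rfl
  rw [hdiff, hk.2.1] at hd
  have h1 : p.size = (cells p).ncard := rfl
  have h2 : q.size = (cells q).ncard := rfl
  omega

lemma chain_size {e : ℕ} : ∀ {h : ℕ} {p c : Ptn},
    RemChain e h p c → p.size = c.size + e * h := by
  intro h
  induction h with
  | zero =>
    intro p c hc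
    have hpc : p = c := hc
    subst hpc
    simp
  | succ n ih =>
    intro p c hc
    obtain ⟨t, ht, hchain⟩ := hc
    have := remhook_size ht
    have := ih hchain
    have hmul : e * (n + 1) = e * n + e := by ring
    omega

lemma exists_core {e : ℕ} (he : 1 ≤ e) : ∀ n (p : Ptn), p.size ≤ n →
    ∃ c h, RemChain e h p c ∧ IsECore e c := by
  intro n
  induction n with
  | zero =>
    intro p hp
    by_cases hcore : IsECore e p
    · exact ⟨p, 0, rfl, hcore⟩
    · exfalso
      rw [IsECore, not_not] at hcore
      obtain ⟨q, hq⟩ := hcore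
      have := remhook_size hq
      omega
  | succ n ih =>
    intro p hp
    by_cases hcore : IsECore e p
    · exact ⟨p, 0, rfl, hcore⟩
    · rw [IsECore, not_not] at hcore
      obtain ⟨q, hq⟩ := hcore
      have hsz := remhook_size hq
      obtain ⟨c, h, hchain, hc⟩ := ih q (by omega)
      exact ⟨c, h + 1, ⟨q, hq, hchain⟩, hc⟩

lemma diamond {e : ℕ} (he : 1 ≤ e) {p q1 q2 : Ptn}
    (h1 : RemHook e p q1) (h2 : RemHook e p q2) (hne : q1 ≠ q2) :
    ∃ t, RemHook e q1 t ∧ RemHook e q2 t := by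
  have he' : (1 : ℤ) ≤ e := by exact_mod_cast he
  obtain ⟨x, hx, hxe, hB1⟩ := remhook_beta he h1
  obtain ⟨y, hy, hye, hB2⟩ := remhook_beta he h2
  have hxy : x ≠ y := by
    rintro rfl
    exact hne (B_inj (hB1.trans hB2.symm))
  have hxy1 : x ≠ y - e := fun h => hye (h ▸ hx)
  have hxy2 : y ≠ x - e := fun h => hxe (h ▸ hy)
  have hxye : x - e ≠ y - e := fun h => hxy (by omega)
  have hy1 : y ∈ B q1 := by
    rw [hB1]
    exact Set.mem_insert_iff.2 (Or.inr ⟨hy, fun hc => hxy (Set.mem_singleton_iff.1 hc).symm⟩)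
  have hye1 : y - (e : ℤ) ∉ B q1 := by
    rw [hB1]
    rintro (h | ⟨h, _⟩)
    · exact hxye h.symm
    · exact hye h
  obtain ⟨t1, ht1, hBt1⟩ := beta_remhook he hy1 hye1
  have hx2 : x ∈ B q2 := by
    rw [hB2]
    exact Set.mem_insert_iff.2 (Or.inr ⟨hx, fun hc => hxy (Set.mem_singleton_iff.1 hc)⟩)
  have hxe2 : x - (e : ℤ) ∉ B q2 := by
    rw [hB2]
    rintro (h | ⟨h, _⟩)
    · exact hxye h
    · exact hxe h
  obtain ⟨t2, ht2, hBt2⟩ := beta_remhook he hx2 hxe2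
  have hBeq : B t1 = B t2 := by
    rw [hBt1, hBt2, hB1, hB2]
    ext z
    simp only [Set.mem_insert_iff, Set.mem_diff, Set.mem_singleton_iff]
    constructor
    · rintro (rfl | ⟨(rfl | ⟨hz, hzx⟩), hzy⟩)
      · exact Or.inr ⟨Or.inl rfl, fun h => hxy1 h.symm⟩
      · exact Or.inl rfl
      · exact Or.inr ⟨Or.inr ⟨hz, hzy⟩, hzx⟩
    · rintro (rfl | ⟨(rfl | ⟨hz, hzy⟩), hzx⟩)
      · exact Or.inr ⟨Or.inl rfl, fun h => hxy2 h.symm⟩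
      · exact Or.inl rfl
      · exact Or.inr ⟨Or.inr ⟨hz, hzx⟩, hzy⟩
  have ht12 : t1 = t2 := B_inj hBeq
  subst ht12
  exact ⟨t1, ht1, ht2⟩

lemma unique_aux {e : ℕ} (he : 1 ≤ e) : ∀ n (p : Ptn), p.size ≤ n →
    ∀ c1 h1 c2 h2, RemChain e h1 p c1 → IsECore e c1 →
      RemChain e h2 p c2 → IsECore e c2 → c1 = c2 ∧ h1 = h2 := by
  intro n
  induction n with
  | zero =>
    intro p hp c1 h1 c2 h2 hc1 hcore1 hc2 hcore2
    cases h1 with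
    | zero =>
      have hpc1 : p = c1 := hc1
      subst hpc1
      cases h2 with
      | zero => exact ⟨hc2, rfl⟩
      | succ k2 =>
        obtain ⟨t, ht, _⟩ := hc2
        exact absurd ⟨t, ht⟩ hcore1
    | succ k1 =>
      obtain ⟨t1, ht1, _⟩ := hc1
      have := remhook_size ht1
      omega
  | succ n ih =>
    intro p hp c1 h1 c2 h2 hc1 hcore1 hc2 hcore2
    cases h1 with
    | zero =>
      have hpc1 : p = c1 := hc1
      subst hpc1
      cases h2 with
      | zero => exact ⟨hc2, rfl⟩
      | succ k2 =>
        obtain ⟨t, ht, _⟩ := hc2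
        exact absurd ⟨t, ht⟩ hcore1
    | succ k1 =>
      obtain ⟨t1, ht1, hch1⟩ := hc1
      have hs1 := remhook_size ht1
      cases h2 with
      | zero =>
        have hpc2 : p = c2 := hc2
        subst hpc2
        exact absurd ⟨t1, ht1⟩ hcore2
      | succ k2 =>
        obtain ⟨t2, ht2, hch2⟩ := hc2
        have hs2 := remhook_size ht2
        by_cases heq : t1 = t2
        · subst heq
          obtain ⟨hc, hh⟩ := ih t1 (by omega) c1 k1 c2 k2 hch1 hcore1 hch2 hcore2
          exact ⟨hc, by omega⟩
        · obtain ⟨t, htt1, htt2⟩ := diamond he ht1 ht2 heq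
          have hst1 := remhook_size htt1
          have hst2 := remhook_size htt2
          obtain ⟨c, k, hck, hcore⟩ := exists_core he t.size t le_rfl
          obtain ⟨hA1, hA2⟩ := ih t1 (by omega) c1 k1 c (k + 1) hch1 hcore1 ⟨t, htt1, hck⟩ hcore
          obtain ⟨hB1, hB2⟩ := ih t2 (by omega) c2 k2 c (k + 1) hch2 hcore2 ⟨t, htt2, hck⟩ hcore
          exact ⟨hA1.trans hB1.symm, by omega⟩

end S4


/-- every maximal sequence of `e`-rim-hook removals from `p` terminates,
always at the same partition (the `e`-core of `p`) after the same number `h(p)` of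
removals (the `e`-weight); and `|p| = |core_e(p)| + e·h(p)`. -/
theorem statement4 (e : ℕ) (he : 2 ≤ e) (p : Ptn) :
    (∃ (c : Ptn) (h : ℕ), RemChain e h p c ∧ IsECore e c) ∧
    ∀ (c₁ : Ptn) (h₁ : ℕ) (c₂ : Ptn) (h₂ : ℕ),
      RemChain e h₁ p c₁ → IsECore e c₁ →
      RemChain e h₂ p c₂ → IsECore e c₂ →
      c₁ = c₂ ∧ h₁ = h₂ ∧ p.size = c₁.size + e * h₁ := by
  have he1 : 1 ≤ e := by omega
  constructor
  · exact S4.exists_core he1 p.size p le_rfl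
  · intro c1 h1 c2 h2 hc1 hcore1 hc2 hcore2
    obtain ⟨hc, hh⟩ := S4.unique_aux he1 p.size p le_rfl c1 h1 c2 h2 hc1 hcore1 hc2 hcore2
    exact ⟨hc, hh, S4.chain_size hc1⟩
end

section
/- Fix integers n, p ≥ 0 with d := min{n,p}. The number of sequences δ ∈ {−,+}^{n+p} with n minuses and p pluses such that the 'reduction' procedure (repeatedly delete an adjacent pair consisting of − followed later by + with only deleted entries in between, i.e. match minus-plus pairs like balanced brackets) removes all minuses or all pluses equals C(n+p, d) − C(n+p, d−1). -/
open Finset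

def redStep {m : ℕ} (δ δ' : Fin m → Option Bool) : Prop :=
  ∃ i j : Fin m, i < j ∧ δ i = some false ∧ δ j = some true ∧
    (∀ k, i < k → k < j → δ k = none) ∧
    δ' = Function.update (Function.update δ i none) j none

def fullyReducible {m : ℕ} (δ : Fin m → Option Bool) : Prop :=
  ∃ δ' : Fin m → Option Bool, Relation.ReflTransGen redStep δ δ' ∧
    (¬ ∃ δ'', redStep δ' δ'') ∧
    ((∀ i, δ' i ≠ some false) ∨ (∀ i, δ' i ≠ some true))

def cntFrom {m : ℕ} (t : ℕ) (a : Option Bool) (δ : Fin m → Option Bool) : ℕ :=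
  (Finset.univ.filter fun i : Fin m => t ≤ (i : ℕ) ∧ δ i = a).card

def cntTo {m : ℕ} (t : ℕ) (a : Option Bool) (δ : Fin m → Option Bool) : ℕ :=
  (Finset.univ.filter fun i : Fin m => (i : ℕ) < t ∧ δ i = a).card

def sc {m : ℕ} (δ : Fin m → Option Bool) : Prop :=
  ∀ t, cntFrom t (some false) δ ≤ cntFrom t (some true) δ

def pc {m : ℕ} (δ : Fin m → Option Bool) : Prop :=
  ∀ t, cntTo t (some true) δ ≤ cntTo t (some false) δ

lemma cntFrom_congr {m : ℕ} {t u : ℕ} (htu : t ≤ u) {a : Option Bool} {δ : Fin m → Option Bool}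
    (h : ∀ k : Fin m, t ≤ (k : ℕ) → (k : ℕ) < u → δ k ≠ a) :
    cntFrom t a δ = cntFrom u a δ := by
  unfold cntFrom
  congr 1
  apply Finset.filter_congr
  intro i _
  constructor
  · rintro ⟨h1, h2⟩
    refine ⟨?_, h2⟩
    by_contra hu
    exact h i h1 (by omega) h2
  · rintro ⟨h1, h2⟩
    exact ⟨le_trans htu h1, h2⟩

lemma cntTo_congr {m : ℕ} {t u : ℕ} (htu : t ≤ u) {a : Option Bool} {δ : Fin m → Option Bool}
    (h : ∀ k : Fin m, t ≤ (k : ℕ) → (k : ℕ) < u → δ k ≠ a) :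
    cntTo t a δ = cntTo u a δ := by
  unfold cntTo
  congr 1
  apply Finset.filter_congr
  intro i _
  constructor
  · rintro ⟨h1, h2⟩
    exact ⟨lt_of_lt_of_le h1 htu, h2⟩
  · rintro ⟨h1, h2⟩
    refine ⟨?_, h2⟩
    by_contra ht
    exact h i (by omega) h1 h2

lemma cntTo_stable {m : ℕ} {t : ℕ} (ht : m ≤ t) (a : Option Bool) (δ : Fin m → Option Bool) :
    cntTo t a δ = cntTo m a δ := by
  unfold cntTo
  congr 1
  apply Finset.filter_congr
  intro i _
  have := i.isLt
  constructor
  · rintro ⟨_, h2⟩; exact ⟨this, h2⟩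
  · rintro ⟨_, h2⟩; exact ⟨by omega, h2⟩

lemma cntFrom_zero_eq {m : ℕ} (a : Option Bool) (δ : Fin m → Option Bool) :
    cntFrom 0 a δ = (Finset.univ.filter fun i : Fin m => δ i = a).card := by
  unfold cntFrom
  congr 1
  apply Finset.filter_congr
  intro i _
  simp

lemma cntTo_total {m : ℕ} (a : Option Bool) (δ : Fin m → Option Bool) :
    cntTo m a δ = cntFrom 0 a δ := by
  unfold cntTo cntFrom
  congr 1
  apply Finset.filter_congr
  intro i _
  simp [i.isLt]

lemma cntSplit {m : ℕ} (t : ℕ) (a : Option Bool) (δ : Fin m → Option Bool) :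
    cntTo t a δ + cntFrom t a δ = cntFrom 0 a δ := by
  unfold cntTo cntFrom
  rw [Finset.card_filter, Finset.card_filter, Finset.card_filter, ← Finset.sum_add_distrib]
  apply Finset.sum_congr rfl
  intro i _
  by_cases h : δ i = a <;> rcases Nat.lt_or_ge (i : ℕ) t with h2 | h2 <;>
    simp [h, h2, Nat.not_le.2, Nat.not_lt.2] <;> omega

section update
variable {m : ℕ} {δ : Fin m → Option Bool} {i j : Fin m}

lemma cntFrom_update_pair (hij : i ≠ j) (t : ℕ) (a : Option Bool) (ha : a ≠ none) :
    cntFrom t a δ =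
      cntFrom t a (Function.update (Function.update δ i none) j none)
        + (if t ≤ (i : ℕ) ∧ δ i = a then 1 else 0)
        + (if t ≤ (j : ℕ) ∧ δ j = a then 1 else 0) := by
  set δ' := Function.update (Function.update δ i none) j none with hδ'
  have hi' : δ' i = none := by
    rw [hδ']; rw [Function.update_of_ne hij, Function.update_self]
  have hj' : δ' j = none := by rw [hδ', Function.update_self]
  have hoff : ∀ k, k ≠ i → k ≠ j → δ' k = δ k := by
    intro k hki hkj
    rw [hδ', Function.update_of_ne hkj, Function.update_of_ne hki]
  unfold cntFrom
  rw [Finset.card_filter, Finset.card_filter]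
  have hjmem : j ∈ (Finset.univ : Finset (Fin m)) := Finset.mem_univ j
  have himem : i ∈ (Finset.univ : Finset (Fin m)).erase j :=
    Finset.mem_erase.2 ⟨hij, Finset.mem_univ i⟩
  set f : (Fin m → Option Bool) → Fin m → ℕ :=
    fun g k => if t ≤ (k : ℕ) ∧ g k = a then 1 else 0 with hf
  have key : ∀ g : Fin m → Option Bool,
      ∑ k, f g k = ∑ k ∈ (Finset.univ.erase j).erase i, f g k + f g i + f g j := by
    intro g
    rw [← Finset.sum_erase_add _ _ hjmem, ← Finset.sum_erase_add _ _ himem]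
  have hsame : ∑ k ∈ (Finset.univ.erase j).erase i, f δ k
      = ∑ k ∈ (Finset.univ.erase j).erase i, f δ' k := by
    apply Finset.sum_congr rfl
    intro k hk
    simp only [Finset.mem_erase] at hk
    rw [hf]; simp only [hoff k hk.1 hk.2.1]
  rw [key δ, key δ', hsame]
  have : f δ' i = 0 := by rw [hf]; simp [hi', Ne.symm ha]
  have h2 : f δ' j = 0 := by rw [hf]; simp [hj', Ne.symm ha]
  rw [this, h2, hf]
  ring

lemma cntTo_update_pair (hij : i ≠ j) (t : ℕ) (a : Option Bool) (ha : a ≠ none) :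
    cntTo t a δ =
      cntTo t a (Function.update (Function.update δ i none) j none)
        + (if (i : ℕ) < t ∧ δ i = a then 1 else 0)
        + (if (j : ℕ) < t ∧ δ j = a then 1 else 0) := by
  set δ' := Function.update (Function.update δ i none) j none with hδ'
  have h0 := cntFrom_update_pair (δ := δ) hij 0 a ha
  have ht := cntFrom_update_pair (δ := δ) hij t a ha
  have s1 := cntSplit t a δ
  have s2 := cntSplit t a δ'
  have s3 := cntSplit 0 a δ
  have s4 := cntSplit 0 a δ'
  simp only [← hδ'] at h0 ht s2 s4 ⊢
  by_cases h1 : δ i = a <;> by_cases h2 : δ j = a <;>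
    rcases Nat.lt_or_ge (i : ℕ) t with h3 | h3 <;>
    rcases Nat.lt_or_ge (j : ℕ) t with h4 | h4 <;>
    simp only [h1, h2, h3, h4, and_true, and_false, if_true, if_false, Nat.not_le.2,
      Nat.not_lt.2, if_neg, if_pos, true_and, Nat.zero_le, Nat.not_lt_zero] at h0 ht ⊢ <;>
    omega
end update

section step
variable {m : ℕ} {δ δ' : Fin m → Option Bool}

lemma redStep_elim (h : redStep δ δ') :
    ∃ i j : Fin m, i < j ∧ δ i = some false ∧ δ j = some true ∧
      (∀ k, i < k → k < j → δ k = none) ∧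
      (∀ t, cntFrom t (some false) δ = cntFrom t (some false) δ' + (if t ≤ (i:ℕ) then 1 else 0)) ∧
      (∀ t, cntFrom t (some true) δ = cntFrom t (some true) δ' + (if t ≤ (j:ℕ) then 1 else 0)) ∧
      (∀ t, cntTo t (some false) δ = cntTo t (some false) δ' + (if (i:ℕ) < t then 1 else 0)) ∧
      (∀ t, cntTo t (some true) δ = cntTo t (some true) δ' + (if (j:ℕ) < t then 1 else 0)) ∧
      (∀ k, k ≠ i → k ≠ j → δ' k = δ k) ∧ δ' i = none ∧ δ' j = none := by
  obtain ⟨i, j, hij, hi, hj, hz, he⟩ := h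
  have hne : i ≠ j := Fin.ne_of_lt hij
  refine ⟨i, j, hij, hi, hj, hz, ?_, ?_, ?_, ?_, ?_, ?_, ?_⟩
  · intro t
    have := cntFrom_update_pair (δ := δ) hne t (some false) (by simp)
    rw [← he] at this
    rw [this]
    simp [hi, hj]
  · intro t
    have := cntFrom_update_pair (δ := δ) hne t (some true) (by simp)
    rw [← he] at this
    rw [this]
    simp [hi, hj]
  · intro t
    have := cntTo_update_pair (δ := δ) hne t (some false) (by simp)
    rw [← he] at this
    rw [this]
    simp [hi, hj]
  · intro t
    have := cntTo_update_pair (δ := δ) hne t (some true) (by simp)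
    rw [← he] at this
    rw [this]
    simp [hi, hj]
  · intro k hki hkj
    rw [he, Function.update_of_ne hkj, Function.update_of_ne hki]
  · rw [he, Function.update_of_ne hne, Function.update_self]
  · rw [he, Function.update_self]

lemma sc_forward (h : redStep δ δ') (hs : sc δ) : sc δ' := by
  obtain ⟨i, j, hij, hi, hj, hz, hf, hg, _, _, hoff, hi', hj'⟩ := redStep_elim h
  intro t
  rcases le_or_gt t (i:ℕ) with h1 | h1
  · have e1 := hf t; have e2 := hg t
    have : t ≤ (j : ℕ) := le_trans h1 (le_of_lt hij)
    have := hs t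
    simp only [if_pos h1, if_pos ‹t ≤ (j:ℕ)›] at e1 e2
    omega
  · rcases le_or_gt t (j:ℕ) with h2 | h2
    · -- i < t ≤ j : all entries of δ' in [t, j+1) are none
      have hz' : ∀ (a : Option Bool), a ≠ none →
          cntFrom t a δ' = cntFrom ((j : ℕ)+1) a δ' := by
        intro a ha
        apply cntFrom_congr (by omega)
        intro k hk1 hk2 hka
        have hkj : (k : ℕ) ≤ (j : ℕ) := by omega
        by_cases hkeq : k = j
        · rw [hkeq, hj'] at hka; exact ha hka.symm
        · have : k ≠ i := by
            intro hke; rw [hke] at hk1; omega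
          rw [hoff k this hkeq] at hka
          have : (k:ℕ) < (j:ℕ) := lt_of_le_of_ne hkj (fun hh => hkeq (Fin.ext hh))
          have : i < k := by
            apply Fin.lt_def.2; omega
          rw [hz k this (by exact Fin.lt_def.2 ‹(k:ℕ) < (j:ℕ)›)] at hka
          exact ha hka.symm
      rw [hz' (some false) (by simp), hz' (some true) (by simp)]
      have e1 := hf ((j:ℕ)+1); have e2 := hg ((j:ℕ)+1)
      have hji : ¬ ((j:ℕ)+1 ≤ (i:ℕ)) := by have := Fin.lt_def.1 hij; omega
      simp only [if_neg hji, if_neg (by omega : ¬ ((j:ℕ)+1 ≤ (j:ℕ)))] at e1 e2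
      have := hs ((j:ℕ)+1)
      omega
    · have e1 := hf t; have e2 := hg t
      simp only [if_neg (by omega : ¬ t ≤ (i:ℕ)), if_neg (by omega : ¬ t ≤ (j:ℕ))] at e1 e2
      have := hs t
      omega

lemma sc_backward (h : redStep δ δ') (hs : sc δ') : sc δ := by
  obtain ⟨i, j, hij, hi, hj, hz, hf, hg, _, _, hoff, hi', hj'⟩ := redStep_elim h
  intro t
  rcases le_or_gt t (i:ℕ) with h1 | h1
  · have e1 := hf t; have e2 := hg t
    have : t ≤ (j : ℕ) := le_trans h1 (le_of_lt hij)
    have := hs t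
    simp only [if_pos h1, if_pos ‹t ≤ (j:ℕ)›] at e1 e2
    omega
  · rcases le_or_gt t (j:ℕ) with h2 | h2
    · -- i < t ≤ j: δ entries in [t, j+1) are none except j which is some true
      have hzf : cntFrom t (some false) δ = cntFrom ((j:ℕ)+1) (some false) δ := by
        apply cntFrom_congr (by omega)
        intro k hk1 hk2 hka
        by_cases hkeq : k = j
        · rw [hkeq, hj] at hka; simp at hka
        · have hik : i < k := Fin.lt_def.2 (by omega)
          have hkj : k < j := Fin.lt_def.2 (by
            have : (k:ℕ) ≤ (j:ℕ) := by omega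
            exact lt_of_le_of_ne this (fun hh => hkeq (Fin.ext hh)))
          rw [hz k hik hkj] at hka; simp at hka
      have e1 := hf ((j:ℕ)+1)
      have e2 := hg t
      have hji : ¬ ((j:ℕ)+1 ≤ (i:ℕ)) := by have := Fin.lt_def.1 hij; omega
      simp only [if_neg hji] at e1
      simp only [if_pos h2] at e2
      -- δ' entries in [t, j+1) are all none
      have hz' : ∀ (a : Option Bool), a ≠ none →
          cntFrom t a δ' = cntFrom ((j : ℕ)+1) a δ' := by
        intro a ha
        apply cntFrom_congr (by omega)
        intro k hk1 hk2 hka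
        by_cases hkeq : k = j
        · rw [hkeq, hj'] at hka; exact ha hka.symm
        · have : k ≠ i := by intro hke; rw [hke] at hk1; omega
          rw [hoff k this hkeq] at hka
          have hik : i < k := Fin.lt_def.2 (by omega)
          have hkj : k < j := Fin.lt_def.2 (by
            have : (k:ℕ) ≤ (j:ℕ) := by omega
            exact lt_of_le_of_ne this (fun hh => hkeq (Fin.ext hh)))
          rw [hz k hik hkj] at hka; exact ha hka.symm
      have := hs ((j:ℕ)+1)
      rw [hzf]
      have e3 := hz' (some true) (by simp)
      omega
    · have e1 := hf t; have e2 := hg t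
      simp only [if_neg (by omega : ¬ t ≤ (i:ℕ)), if_neg (by omega : ¬ t ≤ (j:ℕ))] at e1 e2
      have := hs t
      omega
end step

section step2
variable {m : ℕ} {δ δ' : Fin m → Option Bool}

lemma pc_forward (h : redStep δ δ') (hs : pc δ) : pc δ' := by
  obtain ⟨i, j, hij, hi, hj, hz, _, _, hf, hg, hoff, hi', hj'⟩ := redStep_elim h
  have hijn : (i:ℕ) < (j:ℕ) := Fin.lt_def.1 hij
  intro t
  rcases le_or_gt t (i:ℕ) with h1 | h1
  · have e1 := hf t; have e2 := hg t
    simp only [if_neg (by omega : ¬ (i:ℕ) < t), if_neg (by omega : ¬ (j:ℕ) < t)] at e1 e2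
    have := hs t
    omega
  · rcases le_or_gt t ((j:ℕ)) with h2 | h2
    · -- i < t ≤ j : δ' entries in [i, t) are all none
      have hz' : ∀ (a : Option Bool), a ≠ none →
          cntTo t a δ' = cntTo (i:ℕ) a δ' := by
        intro a ha
        symm
        apply cntTo_congr (by omega)
        intro k hk1 hk2 hka
        by_cases hkeq : k = i
        · rw [hkeq, hi'] at hka; exact ha hka.symm
        · have hki : i < k := Fin.lt_def.2 (lt_of_le_of_ne hk1 (fun hh => hkeq (Fin.ext hh.symm)))
          have hkj : k ≠ j := by intro hke; rw [hke] at hk2; omega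
          rw [hoff k hkeq hkj] at hka
          rw [hz k hki (Fin.lt_def.2 (by omega))] at hka
          exact ha hka.symm
      rw [hz' (some false) (by simp), hz' (some true) (by simp)]
      have e1 := hf (i:ℕ); have e2 := hg (i:ℕ)
      simp only [if_neg (by omega : ¬ (i:ℕ) < (i:ℕ)), if_neg (by omega : ¬ (j:ℕ) < (i:ℕ))]
        at e1 e2
      have := hs (i:ℕ)
      omega
    · have e1 := hf t; have e2 := hg t
      simp only [if_pos (by omega : (i:ℕ) < t), if_pos h2] at e1 e2
      have := hs t
      omega

lemma pc_backward (h : redStep δ δ') (hs : pc δ') : pc δ := by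
  obtain ⟨i, j, hij, hi, hj, hz, _, _, hf, hg, hoff, hi', hj'⟩ := redStep_elim h
  have hijn : (i:ℕ) < (j:ℕ) := Fin.lt_def.1 hij
  intro t
  rcases le_or_gt t (i:ℕ) with h1 | h1
  · have e1 := hf t; have e2 := hg t
    simp only [if_neg (by omega : ¬ (i:ℕ) < t), if_neg (by omega : ¬ (j:ℕ) < t)] at e1 e2
    have := hs t
    omega
  · rcases le_or_gt t ((j:ℕ)) with h2 | h2
    · -- i < t ≤ j
      have hzt : cntTo t (some true) δ = cntTo (i:ℕ) (some true) δ := by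
        symm
        apply cntTo_congr (by omega)
        intro k hk1 hk2 hka
        by_cases hkeq : k = i
        · rw [hkeq, hi] at hka; simp at hka
        · have hki : i < k := Fin.lt_def.2 (lt_of_le_of_ne hk1 (fun hh => hkeq (Fin.ext hh.symm)))
          rw [hz k hki (Fin.lt_def.2 (by omega))] at hka
          simp at hka
      have hz' : ∀ (a : Option Bool), a ≠ none →
          cntTo t a δ' = cntTo (i:ℕ) a δ' := by
        intro a ha
        symm
        apply cntTo_congr (by omega)
        intro k hk1 hk2 hka
        by_cases hkeq : k = i
        · rw [hkeq, hi'] at hka; exact ha hka.symm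
        · have hki : i < k := Fin.lt_def.2 (lt_of_le_of_ne hk1 (fun hh => hkeq (Fin.ext hh.symm)))
          have hkj : k ≠ j := by intro hke; rw [hke] at hk2; omega
          rw [hoff k hkeq hkj] at hka
          rw [hz k hki (Fin.lt_def.2 (by omega))] at hka
          exact ha hka.symm
      have e1 := hf t; have e2 := hg t
      simp only [if_pos (by omega : (i:ℕ) < t), if_neg (by omega : ¬ (j:ℕ) < t)] at e1 e2
      have e3 := hf (i:ℕ); have e4 := hg (i:ℕ)
      simp only [if_neg (by omega : ¬ (i:ℕ) < (i:ℕ)), if_neg (by omega : ¬ (j:ℕ) < (i:ℕ))]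
        at e3 e4
      have hp := hs (i:ℕ)
      have e5 := hz' (some false) (by simp)
      have e6 := hz' (some true) (by simp)
      omega
    · have e1 := hf t; have e2 := hg t
      simp only [if_pos (by omega : (i:ℕ) < t), if_pos h2] at e1 e2
      have := hs t
      omega

/-- if there is a minus before a plus, there is a redex -/
lemma exists_redStep {i j : Fin m} (hij : i < j) (hi : δ i = some false)
    (hj : δ j = some true) : ∃ δ'', redStep δ δ'' := by
  classical
  set T := Finset.univ.filter (fun k : Fin m => i < k ∧ δ k = some true) with hT
  have hTne : T.Nonempty := ⟨j, by simp [hT, hij, hj]⟩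
  set j₀ := T.min' hTne with hj₀
  have hj₀T : j₀ ∈ T := T.min'_mem hTne
  have hj₀p : i < j₀ ∧ δ j₀ = some true := by
    have := hj₀T; rw [hT] at this; simpa using this
  set F := Finset.univ.filter (fun k : Fin m => i ≤ k ∧ k < j₀ ∧ δ k = some false) with hF
  have hFne : F.Nonempty := ⟨i, by simp [hF, hj₀p.1, hi]⟩
  set i₀ := F.max' hFne with hi₀
  have hi₀F : i₀ ∈ F := F.max'_mem hFne
  have hi₀p : i ≤ i₀ ∧ i₀ < j₀ ∧ δ i₀ = some false := by
    have := hi₀F; rw [hF] at this; simpa using this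
  refine ⟨_, i₀, j₀, hi₀p.2.1, hi₀p.2.2, hj₀p.2, ?_, rfl⟩
  intro k hk1 hk2
  rcases hok : δ k with _ | b
  · rfl
  · exfalso
    cases b
    · -- k is a minus between i₀ and j₀ : contradicts maximality of i₀
      have hkF : k ∈ F := by
        rw [hF]; simp only [Finset.mem_filter, Finset.mem_univ, true_and]
        exact ⟨le_trans hi₀p.1 (le_of_lt hk1), hk2, hok⟩
      have := F.le_max' k hkF
      rw [← hi₀] at this
      exact absurd hk1 (not_lt.2 this)
    · -- k is a plus between i₀ and j₀ : contradicts minimality of j₀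
      have hkT : k ∈ T := by
        rw [hT]; simp only [Finset.mem_filter, Finset.mem_univ, true_and]
        exact ⟨lt_of_le_of_lt hi₀p.1 hk1, hok⟩
      have := T.min'_le k hkT
      rw [← hj₀] at this
      exact absurd hk2 (not_lt.2 this)

lemma cntFrom_pos {t : ℕ} {a : Option Bool} {i : Fin m} (ht : t ≤ (i:ℕ)) (hi : δ i = a) :
    0 < cntFrom t a δ := by
  apply Finset.card_pos.2
  exact ⟨i, by simp [ht, hi]⟩

lemma cntTo_pos {t : ℕ} {a : Option Bool} {i : Fin m} (ht : (i:ℕ) < t) (hi : δ i = a) :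
    0 < cntTo t a δ := by
  apply Finset.card_pos.2
  exact ⟨i, by simp [ht, hi]⟩

lemma terminal_sc_no_minus (hterm : ¬ ∃ δ'', redStep δ δ'') (hs : sc δ) :
    ∀ i, δ i ≠ some false := by
  intro i hi
  have h1 : 0 < cntFrom (i:ℕ) (some false) δ := cntFrom_pos le_rfl hi
  have h2 : 0 < cntFrom (i:ℕ) (some true) δ := lt_of_lt_of_le h1 (hs _)
  obtain ⟨j, hj⟩ := Finset.card_pos.1 h2
  simp only [Finset.mem_filter, Finset.mem_univ, true_and] at hj
  have hij : i < j := by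
    have : i ≠ j := by intro he; rw [← he, hi] at hj; simp at hj
    exact Fin.lt_def.2 (lt_of_le_of_ne hj.1 (fun hh => this (Fin.ext hh)))
  exact hterm (exists_redStep hij hi hj.2)

lemma terminal_pc_no_plus (hterm : ¬ ∃ δ'', redStep δ δ'') (hs : pc δ) :
    ∀ j, δ j ≠ some true := by
  intro j hj
  have h1 : 0 < cntTo ((j:ℕ)+1) (some true) δ := cntTo_pos (by omega) hj
  have h2 : 0 < cntTo ((j:ℕ)+1) (some false) δ := lt_of_lt_of_le h1 (hs _)
  obtain ⟨i, hi⟩ := Finset.card_pos.1 h2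
  simp only [Finset.mem_filter, Finset.mem_univ, true_and] at hi
  have hij : i < j := by
    have : i ≠ j := by intro he; rw [he, hj] at hi; simp at hi
    exact Fin.lt_def.2 (lt_of_le_of_ne (by omega) (fun hh => this (Fin.ext hh)))
  exact hterm (exists_redStep hij hi.2 hj)

lemma no_minus_sc (h : ∀ i, δ i ≠ some false) : sc δ := by
  intro t
  have : cntFrom t (some false) δ = 0 := by
    apply Finset.card_eq_zero.2
    rw [Finset.eq_empty_iff_forall_notMem]
    intro i hi
    simp only [Finset.mem_filter] at hi
    exact h i hi.2.2
  omega

lemma no_plus_pc (h : ∀ i, δ i ≠ some true) : pc δ := by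
  intro t
  have : cntTo t (some true) δ = 0 := by
    apply Finset.card_eq_zero.2
    rw [Finset.eq_empty_iff_forall_notMem]
    intro i hi
    simp only [Finset.mem_filter] at hi
    exact h i hi.2.2
  omega

lemma redStep_measure (h : redStep δ δ') :
    (Finset.univ.filter fun k => δ' k ≠ none).card <
      (Finset.univ.filter fun k => δ k ≠ none).card := by
  obtain ⟨i, j, hij, hi, hj, hz, _, _, _, _, hoff, hi', hj'⟩ := redStep_elim h
  apply Finset.card_lt_card
  rw [Finset.ssubset_iff_of_subset]
  · exact ⟨i, by simp [hi], by simp [hi']⟩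
  · intro k hk
    simp only [Finset.mem_filter, Finset.mem_univ, true_and] at hk ⊢
    by_cases h1 : k = i
    · rw [h1, hi'] at hk; exact absurd rfl hk
    by_cases h2 : k = j
    · rw [h2, hj'] at hk; exact absurd rfl hk
    rwa [hoff k h1 h2] at hk

lemma exists_terminal' :
    ∀ (N : ℕ) (g : Fin m → Option Bool),
      (Finset.univ.filter fun k => g k ≠ none).card ≤ N →
      ∃ δ', Relation.ReflTransGen redStep g δ' ∧ ¬ ∃ δ'', redStep δ' δ'' := by
  intro N
  induction N with
  | zero =>
    intro g hg
    refine ⟨g, Relation.ReflTransGen.refl, ?_⟩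
    rintro ⟨δ'', i, j, hij, hi, hj, _, _⟩
    have : i ∈ Finset.univ.filter fun k => g k ≠ none := by simp [hi]
    rw [Finset.card_eq_zero.1 (Nat.le_zero.1 hg)] at this
    simp at this
  | succ N ih =>
    intro g hg
    by_cases hterm : ∃ δ'', redStep g δ''
    · obtain ⟨g', hstep⟩ := hterm
      have := redStep_measure hstep
      obtain ⟨δ', hchain, hfin⟩ := ih g' (by omega)
      exact ⟨δ', Relation.ReflTransGen.head hstep hchain, hfin⟩
    · exact ⟨g, Relation.ReflTransGen.refl, hterm⟩

lemma sc_star_forward {x y : Fin m → Option Bool} (h : Relation.ReflTransGen redStep x y) :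
    sc x → sc y := by
  induction h with
  | refl => exact id
  | tail _ hstep ih => exact fun hx => sc_forward hstep (ih hx)

lemma pc_star_forward {x y : Fin m → Option Bool} (h : Relation.ReflTransGen redStep x y) :
    pc x → pc y := by
  induction h with
  | refl => exact id
  | tail _ hstep ih => exact fun hx => pc_forward hstep (ih hx)

lemma sc_star_backward {x y : Fin m → Option Bool} (h : Relation.ReflTransGen redStep x y) :
    sc y → sc x := by
  induction h with
  | refl => exact id
  | tail _ hstep ih => exact fun hy => ih (sc_backward hstep hy)

lemma pc_star_backward {x y : Fin m → Option Bool} (h : Relation.ReflTransGen redStep x y) :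
    pc y → pc x := by
  induction h with
  | refl => exact id
  | tail _ hstep ih => exact fun hy => ih (pc_backward hstep hy)

theorem fullyReducible_iff (δ : Fin m → Option Bool) :
    fullyReducible δ ↔ sc δ ∨ pc δ := by
  constructor
  · rintro ⟨δ', hchain, hterm, hend⟩
    rcases hend with hend | hend
    · exact Or.inl (sc_star_backward hchain (no_minus_sc hend))
    · exact Or.inr (pc_star_backward hchain (no_plus_pc hend))
  · intro h
    obtain ⟨δ', hchain, hterm⟩ := exists_terminal' (m := m)
      (Finset.univ.filter fun k => δ k ≠ none).card δ le_rfl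
    refine ⟨δ', hchain, hterm, ?_⟩
    rcases h with h | h
    · exact Or.inl (terminal_sc_no_minus hterm (sc_star_forward hchain h))
    · exact Or.inr (terminal_pc_no_plus hterm (pc_star_forward hchain h))
end step2

section counting
open Finset

lemma cntFrom_cons_succ {m : ℕ} (v : Option Bool) (δ₀ : Fin m → Option Bool) (t : ℕ)
    (a : Option Bool) : cntFrom (t+1) a (Fin.cons v δ₀) = cntFrom t a δ₀ := by
  unfold cntFrom
  rw [Finset.card_filter, Finset.card_filter, Fin.sum_univ_succ]
  simp only [Fin.cons_zero, Fin.cons_succ, Fin.val_zero, Fin.val_succ]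
  rw [if_neg (by omega : ¬ (t + 1 ≤ 0 ∧ v = a))]
  rw [zero_add]
  apply Finset.sum_congr rfl
  intro i _
  congr 1
  simp only [eq_iff_iff]
  constructor
  · rintro ⟨h1, h2⟩; exact ⟨by omega, h2⟩
  · rintro ⟨h1, h2⟩; exact ⟨by omega, h2⟩

lemma cntFrom_cons_zero {m : ℕ} (v : Option Bool) (δ₀ : Fin m → Option Bool)
    (a : Option Bool) : cntFrom 0 a (Fin.cons v δ₀) = (if v = a then 1 else 0) + cntFrom 0 a δ₀ := by
  unfold cntFrom
  rw [Finset.card_filter, Finset.card_filter, Fin.sum_univ_succ]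
  simp [Fin.cons_zero, Fin.cons_succ]

lemma sc_cons {m : ℕ} (v : Option Bool) (δ₀ : Fin m → Option Bool) :
    sc (Fin.cons v δ₀) ↔ sc δ₀ ∧
      cntFrom 0 (some false) (Fin.cons v δ₀) ≤ cntFrom 0 (some true) (Fin.cons v δ₀) := by
  constructor
  · intro h
    refine ⟨fun t => ?_, h 0⟩
    have := h (t+1)
    rwa [cntFrom_cons_succ, cntFrom_cons_succ] at this
  · rintro ⟨h1, h2⟩
    intro t
    cases t with
    | zero => exact h2
    | succ t => rw [cntFrom_cons_succ, cntFrom_cons_succ]; exact h1 t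

def som {m : ℕ} (g : Fin m → Bool) : Fin m → Option Bool := fun i => some (g i)

lemma som_cons {m : ℕ} (x : Bool) (h : Fin m → Bool) :
    som (Fin.cons x h) = Fin.cons (some x) (som h) := by
  funext i
  refine Fin.cases ?_ ?_ i <;> simp [som]

lemma som_total {m : ℕ} (g : Fin m → Bool) :
    cntFrom 0 (some false) (som g) + cntFrom 0 (some true) (som g) = m := by
  unfold cntFrom
  rw [Finset.card_filter, Finset.card_filter, ← Finset.sum_add_distrib]
  have : ∀ i : Fin m, ((if 0 ≤ (i:ℕ) ∧ som g i = some false then 1 else 0)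
      + if 0 ≤ (i:ℕ) ∧ som g i = some true then 1 else 0) = 1 := by
    intro i
    cases hgi : g i <;> simp [som, hgi]
  rw [Finset.sum_congr rfl (fun i _ => this i), Finset.sum_const, smul_eq_mul, mul_one,
    Finset.card_univ, Fintype.card_fin]

def setA (m k : ℕ) : Set (Fin m → Bool) := {g | cntFrom 0 (some false) (som g) = k ∧ sc (som g)}

lemma setA_zero (m : ℕ) : setA m 0 = {fun _ => true} := by
  ext g
  simp only [setA, Set.mem_setOf_eq, Set.mem_singleton_iff]
  constructor
  · rintro ⟨h1, _⟩
    funext i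
    by_contra hgi
    have hgi' : g i = false := by cases hg : g i; rfl; exact absurd hg hgi
    have : 0 < cntFrom 0 (some false) (som g) :=
      cntFrom_pos (i := i) (Nat.zero_le _) (by simp [som, hgi'])
    omega
  · rintro rfl
    constructor
    · apply Finset.card_eq_zero.2
      rw [Finset.eq_empty_iff_forall_notMem]
      intro i hi
      simp [som] at hi
    · apply no_minus_sc
      intro i
      simp [som]

lemma setA_empty {m k : ℕ} (h : m < 2*k) : setA m k = ∅ := by
  rw [Set.eq_empty_iff_forall_notMem]
  rintro g ⟨h1, h2⟩
  have := h2 0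
  have ht := som_total g
  omega

lemma setA_succ {m k : ℕ} (hk : 1 ≤ k) (hkm : 2*k ≤ m+1) :
    setA (m+1) k = (Fin.cons false '' setA m (k-1)) ∪ (Fin.cons true '' setA m k) := by
  ext g
  constructor
  · rintro ⟨h1, h2⟩
    have hg : g = Fin.cons (g 0) (Fin.tail g) := (Fin.cons_self_tail g).symm
    rw [hg, som_cons, cntFrom_cons_zero] at h1
    rw [hg, som_cons, sc_cons] at h2
    cases h0 : g 0
    · left
      refine ⟨Fin.tail g, ⟨?_, h2.1⟩, by rw [← h0]; exact (Fin.cons_self_tail g)⟩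
      rw [h0] at h1; simp at h1; omega
    · right
      refine ⟨Fin.tail g, ⟨?_, h2.1⟩, by rw [← h0]; exact (Fin.cons_self_tail g)⟩
      rw [h0] at h1; simpa using h1
  · rintro (⟨h', ⟨hc, hsc⟩, rfl⟩ | ⟨h', ⟨hc, hsc⟩, rfl⟩)
    · have ht := som_total h'
      constructor
      · rw [som_cons, cntFrom_cons_zero]; simp; omega
      · rw [som_cons, sc_cons]
        refine ⟨hsc, ?_⟩
        rw [cntFrom_cons_zero, cntFrom_cons_zero]
        simp
        omega
    · have ht := som_total h'
      constructor
      · rw [som_cons, cntFrom_cons_zero]; simp; omega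
      · rw [som_cons, sc_cons]
        refine ⟨hsc, ?_⟩
        rw [cntFrom_cons_zero, cntFrom_cons_zero]
        simp
        omega

end counting

section acount
noncomputable def aCnt (m k : ℕ) : ℕ := (setA m k).ncard

lemma aCnt_zero (m : ℕ) : aCnt m 0 = 1 := by
  rw [aCnt, setA_zero, Set.ncard_singleton]

lemma aCnt_empty {m k : ℕ} (h : m < 2*k) : aCnt m k = 0 := by
  rw [aCnt, setA_empty h, Set.ncard_empty]

lemma aCnt_succ {m k : ℕ} (hk : 1 ≤ k) (hkm : 2*k ≤ m+1) :
    aCnt (m+1) k = aCnt m (k-1) + aCnt m k := by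
  have hinjf : Function.Injective (fun h : Fin m → Bool => (Fin.cons false h : Fin (m+1) → Bool)) := by
    intro a b hab
    funext i
    have := congrFun hab i.succ
    simpa [Fin.cons_succ] using this
  have hinjt : Function.Injective (fun h : Fin m → Bool => (Fin.cons true h : Fin (m+1) → Bool)) := by
    intro a b hab
    funext i
    have := congrFun hab i.succ
    simpa [Fin.cons_succ] using this
  have himf : (Fin.cons false '' setA m (k-1)) = (fun h : Fin m → Bool => (Fin.cons false h : Fin (m+1) → Bool)) '' setA m (k-1) := rfl
  have himt : (Fin.cons true '' setA m k) = (fun h : Fin m → Bool => (Fin.cons true h : Fin (m+1) → Bool)) '' setA m k := rfl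
  have hdisj : Disjoint
      ((fun h : Fin m → Bool => (Fin.cons false h : Fin (m+1) → Bool)) '' setA m (k-1))
      ((fun h : Fin m → Bool => (Fin.cons true h : Fin (m+1) → Bool)) '' setA m k) := by
    rw [Set.disjoint_left]
    rintro g ⟨h1, _, rfl⟩ ⟨h2, _, he⟩
    have := congrFun he 0
    simp at this
  rw [aCnt, setA_succ hk hkm, himf, himt,
    Set.ncard_union_eq hdisj (Set.toFinite _) (Set.toFinite _),
    Set.ncard_image_of_injective _ hinjf, Set.ncard_image_of_injective _ hinjt]
  rfl

lemma aCnt_formula : ∀ m k : ℕ, 2*k ≤ m →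
    (aCnt m k : ℤ) = ((Nat.choose m k : ℕ) : ℤ)
      - (if k = 0 then 0 else ((Nat.choose m (k-1) : ℕ) : ℤ)) := by
  intro m
  induction m with
  | zero =>
    intro k hk
    have : k = 0 := by omega
    subst this
    simp [aCnt_zero]
  | succ m ih =>
    intro k hk
    cases k with
    | zero => simp [aCnt_zero]
    | succ k =>
      have hrec := aCnt_succ (m := m) (k := k+1) (by omega) (by omega)
      simp only [Nat.add_sub_cancel] at hrec
      have f1 : (aCnt m k : ℤ) = (Nat.choose m k : ℤ)
          - (if k = 0 then 0 else ((Nat.choose m (k-1) : ℕ) : ℤ)) := ih k (by omega)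
      have f2 : (aCnt m (k+1) : ℤ) = (Nat.choose m (k+1) : ℤ) - (Nat.choose m k : ℤ) := by
        rcases le_or_gt (2*(k+1)) m with h | h
        · have := ih (k+1) h
          simpa using this
        · have hm : m = 2*k+1 := by omega
          have h0 : aCnt m (k+1) = 0 := aCnt_empty (by omega)
          have hsym : Nat.choose m (k+1) = Nat.choose m k := by
            subst hm
            have := Nat.choose_symm (n := 2*k+1) (k := k) (by omega)
            have he : 2*k+1-k = k+1 := by omega
            rw [he] at this
            exact this
          rw [h0, hsym]
          simp
      have pascal1 : Nat.choose (m+1) (k+1) = Nat.choose m k + Nat.choose m (k+1) := by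
        simpa using Nat.choose_succ_succ m k
      have pascal2 : k ≥ 1 → Nat.choose (m+1) k = Nat.choose m (k-1) + Nat.choose m k := by
        intro hk1
        obtain ⟨k', rfl⟩ : ∃ k', k = k'+1 := ⟨k-1, by omega⟩
        simpa using Nat.choose_succ_succ m k'
      rw [hrec]
      push_cast
      rw [f1, f2]
      by_cases hk0 : k = 0
      · subst hk0
        simp only [if_pos rfl]
        have : Nat.choose (m+1) 1 = Nat.choose m 0 + Nat.choose m 1 := Nat.choose_succ_succ m 0
        push_cast [Nat.choose_succ_succ m 0, Nat.choose_succ_succ m 1]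
        push_cast [pascal1]
        simp [Nat.choose_zero_right]
      · rw [if_neg hk0]
        push_cast [pascal1, pascal2 (by omega)]
        ring
end acount

section reversal
variable {m : ℕ}

def revg (g : Fin m → Bool) : Fin m → Bool := fun i => ! g i.rev

lemma revg_revg (g : Fin m → Bool) : revg (revg g) = g := by
  funext i
  simp [revg, Fin.rev_rev]

lemma cnt_rev (g : Fin m → Bool) (b : Bool) (t : ℕ) :
    cntFrom t (some b) (som (revg g)) = cntTo (m - t) (some (!b)) (som g) := by
  unfold cntFrom cntTo
  apply Finset.card_bij' (fun i _ => i.rev) (fun j _ => j.rev)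
  · intro i _; exact Fin.rev_rev i
  · intro j _; exact Fin.rev_rev j
  · intro i hi
    rw [Finset.mem_filter] at hi ⊢
    simp only [Finset.mem_filter, Finset.mem_univ, true_and, som, revg] at hi ⊢
    obtain ⟨h1, h2⟩ := hi
    have hb : g i.rev = !b := by
      have := Option.some.inj h2
      cases hgb : g i.rev <;> cases b <;> simp [hgb] at this ⊢
    refine ⟨?_, by rw [hb]⟩
    have hv : (i.rev : ℕ) = m - ((i : ℕ) + 1) := Fin.val_rev i
    have := i.isLt
    omega
  · intro j hj
    rw [Finset.mem_filter] at hj ⊢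
    simp only [Finset.mem_filter, Finset.mem_univ, true_and, som, revg] at hj ⊢
    obtain ⟨h1, h2⟩ := hj
    have hb : g j = !b := Option.some.inj h2
    rw [Fin.rev_rev]
    refine ⟨?_, by rw [hb]; cases b <;> simp⟩
    have hv : (j.rev : ℕ) = m - ((j : ℕ) + 1) := Fin.val_rev j
    have := j.isLt
    omega

lemma sc_revg_iff_pc (g : Fin m → Bool) : sc (som (revg g)) ↔ pc (som g) := by
  constructor
  · intro h t'
    rcases le_or_gt t' m with ht | ht
    · have := h (m - t')
      rw [cnt_rev, cnt_rev] at this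
      simpa [Nat.sub_sub_self ht] using this
    · rw [cntTo_stable (le_of_lt ht), cntTo_stable (le_of_lt ht)]
      have := h 0
      rw [cnt_rev, cnt_rev] at this
      simpa using this
  · intro h t
    rw [cnt_rev, cnt_rev]
    exact h (m - t)

lemma cnt_rev_total (g : Fin m → Bool) (b : Bool) :
    cntFrom 0 (some b) (som (revg g)) = cntFrom 0 (some (!b)) (som g) := by
  rw [cnt_rev, Nat.sub_zero, cntTo_total]
end reversal

section assembly
variable {m : ℕ}

lemma pc_to_sc {g : Fin m → Bool} (hc : cntFrom 0 (some false) (som g) = cntFrom 0 (some true) (som g))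
    (h : pc (som g)) : sc (som g) := by
  intro t
  have s1 := cntSplit t (some false) (som g)
  have s2 := cntSplit t (some true) (som g)
  have := h t
  omega

lemma pc_total_le {g : Fin m → Bool} (h : pc (som g)) :
    cntFrom 0 (some true) (som g) ≤ cntFrom 0 (some false) (som g) := by
  have := h m
  rwa [cntTo_total, cntTo_total] at this

lemma sc_total_le {g : Fin m → Bool} (h : sc (som g)) :
    cntFrom 0 (some false) (som g) ≤ cntFrom 0 (some true) (som g) := h 0

end assembly

/-- the number of sequences `δ ∈ {−,+}^{n+p}` with `n` minuses and `p`
pluses for which the reduction removes all minuses or all pluses equals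
`C(n+p, d) − C(n+p, d−1)` where `d = min{n,p}` (with `C(m,−1) = 0`). -/
theorem statement7 (n p : ℕ) :
    ({δ : Fin (n + p) → Option Bool |
        (∀ i, δ i ≠ none) ∧
        (Finset.univ.filter fun i => δ i = some false).card = n ∧
        (Finset.univ.filter fun i => δ i = some true).card = p ∧
        fullyReducible δ}.ncard : ℤ)
      = ((n + p).choose (min n p) : ℤ)
        - (if min n p = 0 then 0 else ((n + p).choose (min n p - 1) : ℤ)) := by
  set m := n + p with hm
  set SB : Set (Fin m → Bool) := {g | cntFrom 0 (some false) (som g) = n ∧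
    cntFrom 0 (some true) (som g) = p ∧ (sc (som g) ∨ pc (som g))} with hSB
  have hS : {δ : Fin (n + p) → Option Bool |
        (∀ i, δ i ≠ none) ∧
        (Finset.univ.filter fun i => δ i = some false).card = n ∧
        (Finset.univ.filter fun i => δ i = some true).card = p ∧
        fullyReducible δ} = som '' SB := by
    ext δ
    simp only [Set.mem_setOf_eq, Set.mem_image]
    constructor
    · rintro ⟨h0, h1, h2, h3⟩
      have hsom : som (fun i => (δ i).iget) = δ := by
        funext i
        rcases hδi : δ i with _ | b
        · exact absurd hδi (h0 i)
        · simp [som, hδi]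
      refine ⟨fun i => (δ i).iget, ?_, hsom⟩
      rw [hSB]
      simp only [Set.mem_setOf_eq]
      rw [hsom]
      refine ⟨by rw [cntFrom_zero_eq]; exact h1, by rw [cntFrom_zero_eq]; exact h2, ?_⟩
      rw [← fullyReducible_iff]
      exact h3
    · rintro ⟨g, hg, rfl⟩
      rw [hSB] at hg
      obtain ⟨h1, h2, h3⟩ := hg
      refine ⟨fun i => by simp [som], ?_, ?_, ?_⟩
      · rw [← cntFrom_zero_eq]; exact h1
      · rw [← cntFrom_zero_eq]; exact h2
      · rw [fullyReducible_iff]; exact h3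
  rw [hS, Set.ncard_image_of_injective _ (fun g g' hgg' => by
    funext i; have := congrFun hgg' i; simpa [som] using this)]
  have key : SB.ncard = aCnt m (min n p) := by
    rcases le_or_gt n p with hnp | hnp
    · have : SB = setA m n := by
        ext g
        rw [hSB]
        simp only [Set.mem_setOf_eq, setA]
        constructor
        · rintro ⟨h1, h2, h3 | h3⟩
          · exact ⟨h1, h3⟩
          · have hle := pc_total_le h3
            have : n = p := by omega
            exact ⟨h1, pc_to_sc (by omega) h3⟩
        · rintro ⟨h1, h2⟩
          have ht := som_total g
          exact ⟨h1, by omega, Or.inl h2⟩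
      rw [this, min_eq_left hnp]; rfl
    · have : SB = revg '' setA m p := by
        ext g
        rw [hSB]
        simp only [Set.mem_setOf_eq, setA, Set.mem_image]
        constructor
        · rintro ⟨h1, h2, h3 | h3⟩
          · have := sc_total_le h3; omega
          · refine ⟨revg g, ⟨?_, ?_⟩, revg_revg g⟩
            · rw [cnt_rev_total]; simpa using h2
            · rw [sc_revg_iff_pc]; exact h3
        · rintro ⟨h', ⟨hc, hsc⟩, rfl⟩
          have ht := som_total h'
          have e1 : cntFrom 0 (some false) (som (revg h')) = cntFrom 0 (some true) (som h') := by
            simpa using cnt_rev_total h' false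
          have e2 : cntFrom 0 (some true) (som (revg h')) = cntFrom 0 (some false) (som h') := by
            simpa using cnt_rev_total h' true
          refine ⟨by omega, by omega, Or.inr ?_⟩
          rw [← sc_revg_iff_pc, revg_revg]
          · exact hsc
      rw [this, Set.ncard_image_of_injective _ (fun g g' hgg' => by
        have := congrArg revg hgg'; rwa [revg_revg, revg_revg] at this),
        min_eq_right (le_of_lt hnp)]
      rfl
  rw [key]
  have h2min : 2 * (min n p) ≤ m := by omega
  have := aCnt_formula m (min n p) h2min
  rw [this]
end

section
/- Fix e ≥ 2, a core block Ĉ with associated sequences δ_λ ∈ {−,0,+}^e. Suppose λ ∈ Ĉ has δ_u(λ) = − and δ_v(λ) = + with u < v, and let μ = s_{uv}(λ) be the bipartition obtained by swapping these entries (moving a bead from the end of runner j_u to the end of runner j_v on the first abacus and the reverse move on the second abacus). Then μ strictly dominates λ in the dominance order on bipartitions. -/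
/-- Partial sums `p_1 + ⋯ + p_t` of the parts of a partition. -/
def Ptn.psum (p : Ptn) (t : ℕ) : ℕ := ∑ i ∈ Finset.range t, p.f i

/-- Dominance order on bipartitions: `mu ⊵ lam` iff all the partial sums of `mu`
(taken through the components in order) are at least those of `lam`. -/
noncomputable def bipDom (mu lam : Ptn × Ptn) : Prop :=
  (∀ t : ℕ, lam.1.psum t ≤ mu.1.psum t) ∧
  (∀ t : ℕ, lam.1.size + lam.2.psum t ≤ mu.1.size + mu.2.psum t)

/- ### Auxiliary lemmas -/

lemma strictAnti_eq_of_range_eq {b c : ℕ → ℤ} (hb : StrictAnti b) (hc : StrictAnti c)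
    (h : Set.range b = Set.range c) : b = c := by
  funext i
  induction i using Nat.strong_induction_on with
  | _ i ih =>
    have h1 : b i ≤ c i := by
      obtain ⟨j, hj⟩ : b i ∈ Set.range c := h ▸ Set.mem_range_self i
      rcases lt_or_ge j i with hji | hji
      · have : b j = b i := (ih j hji).trans hj
        exact absurd this (ne_of_gt (hb hji))
      · exact hj ▸ hc.antitone hji
    have h2 : c i ≤ b i := by
      obtain ⟨j, hj⟩ : c i ∈ Set.range b := h.symm ▸ Set.mem_range_self i
      rcases lt_or_ge j i with hji | hji
      · have : c j = c i := (ih j hji).symm.trans hj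
        exact absurd this (ne_of_gt (hc hji))
      · exact hj ▸ hb.antitone hji
    omega

/-- The beta sequence of a partition. -/
def bseq (a : ℤ) (p : Ptn) : ℕ → ℤ := fun i => (p.f i : ℤ) - (i + 1) + a

lemma bseq_strictAnti (a : ℤ) (p : Ptn) : StrictAnti (bseq a p) := by
  apply strictAnti_nat_of_succ_lt
  intro n
  have h : p.f (n + 1) ≤ p.f n := p.antitone (Nat.le_succ n)
  simp only [bseq]
  push_cast
  omega

lemma bseq_range (a : ℤ) (p : Ptn) : Set.range (bseq a p) = betaSet a p := by
  ext v
  simp only [Set.mem_range, betaSet, Set.mem_setOf_eq, bseq, eq_comm]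

/-- Main workhorse: replacing a beta-number `x` by a larger `y`. -/
lemma replace_psum (a : ℤ) (p q : Ptn) (x y : ℤ) (hxy : x < y)
    (hx : x ∈ betaSet a p) (hy : y ∉ betaSet a p)
    (hq : betaSet a q = insert y (betaSet a p \ {x})) :
    (∀ t, (p.psum t : ℤ) ≤ (q.psum t : ℤ) ∧ (q.psum t : ℤ) ≤ (p.psum t : ℤ) + (y - x)) ∧
    ∃ K : ℕ, ∀ t, K ≤ t → (q.psum t : ℤ) = (p.psum t : ℤ) + (y - x) := by
  set b : ℕ → ℤ := bseq a p with hbdef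
  set c : ℕ → ℤ := bseq a q with hcdef
  have hb : StrictAnti b := bseq_strictAnti a p
  have hc : StrictAnti c := bseq_strictAnti a q
  obtain ⟨k, hk⟩ : ∃ k, x = b k := hx
  have hynr : ∀ i, b i ≠ y := by
    intro i hi
    exact hy ⟨i, hi.symm⟩
  have hex : ∃ i, b i < y := ⟨k, by omega⟩
  set m := Nat.find hex with hmdef
  have hm : b m < y := Nat.find_spec hex
  have hm2 : ∀ i, i < m → y < b i := by
    intro i h
    have := Nat.find_min hex h
    have := hynr i
    omega
  have hmk : m ≤ k := Nat.find_le (by omega)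
  set c' : ℕ → ℤ := fun i => if i < m then b i else if i = m then y
      else if i ≤ k then b (i - 1) else b i with hc'def
  have vlt : ∀ i, i < m → c' i = b i := by
    intro i h; simp only [hc'def, if_pos h]
  have vm : c' m = y := by
    simp [hc'def]
  have vmid : ∀ i, m < i → i ≤ k → c' i = b (i - 1) := by
    intro i h1 h2
    simp only [hc'def]
    rw [if_neg (by omega), if_neg (by omega), if_pos h2]
  have vhi : ∀ i, k < i → c' i = b i := by
    intro i h
    simp only [hc'def]
    rw [if_neg (by omega), if_neg (by omega), if_neg (by omega)]
  have hs : StrictAnti c' := by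
    apply strictAnti_nat_of_succ_lt
    intro n
    rcases lt_or_ge (n + 1) m with h | h
    · rw [vlt _ h, vlt _ (by omega)]; exact hb (by omega)
    rcases eq_or_lt_of_le h with h | h
    · rw [← h, vm, vlt _ (by omega)]
      exact hm2 _ (by omega)
    rcases lt_or_ge k (n + 1) with h2 | h2
    · rw [vhi _ h2]
      rcases lt_or_ge k n with h3 | h3
      · rw [vhi _ h3]; exact hb (by omega)
      · rcases eq_or_lt_of_le (by omega : m ≤ n) with h4 | h4
        · rw [← h4, vm]
          calc b (m + 1) < b m := hb (by omega)
            _ < y := hm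
        · rw [vmid n h4 h3]; exact hb (by omega)
    · rw [vmid (n + 1) (by omega) h2]
      have e : n + 1 - 1 = n := rfl
      rw [e]
      rcases eq_or_lt_of_le (by omega : m ≤ n) with h4 | h4
      · rw [← h4, vm]; exact hm
      · rw [vmid n h4 (by omega)]; exact hb (by omega)
  have hr : Set.range c' = insert y (Set.range b \ {x}) := by
    ext v
    simp only [Set.mem_range, Set.mem_insert_iff, Set.mem_diff, Set.mem_singleton_iff]
    constructor
    · rintro ⟨i, rfl⟩
      rcases lt_or_ge i m with h | h
      · rw [vlt _ h]
        right
        exact ⟨⟨i, rfl⟩, by have := hm2 i h; omega⟩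
      rcases eq_or_lt_of_le h with h | h
      · left; rw [← h, vm]
      rcases le_or_gt i k with h2 | h2
      · rw [vmid i h h2]
        right
        refine ⟨⟨i - 1, rfl⟩, ?_⟩
        have := hb (show i - 1 < k by omega)
        omega
      · rw [vhi _ h2]
        right
        refine ⟨⟨i, rfl⟩, ?_⟩
        have := hb h2
        omega
    · rintro (rfl | ⟨⟨i, rfl⟩, hne⟩)
      · exact ⟨m, vm⟩
      · have hik : i ≠ k := by rintro rfl; omega
        rcases lt_or_ge i m with h | h
        · exact ⟨i, vlt _ h⟩
        rcases lt_or_ge i k with h2 | h2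
        · exact ⟨i + 1, by rw [vmid (i + 1) (by omega) (by omega), Nat.add_sub_cancel]⟩
        · exact ⟨i, vhi _ (by omega)⟩
  have hcc : c = c' := by
    apply strictAnti_eq_of_range_eq hc hs
    rw [hcdef, bseq_range, hq, ← bseq_range a p, ← hbdef, hr]
  set d : ℕ → ℤ := fun t => if t ≤ m then 0 else if t ≤ k then y - b (t - 1) else y - x
    with hddef
  have hsum : ∀ t, ∑ i ∈ Finset.range t, c' i = (∑ i ∈ Finset.range t, b i) + d t := by
    intro t
    induction t with
    | zero => simp [hddef]
    | succ n ih =>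
      rw [Finset.sum_range_succ, Finset.sum_range_succ, ih]
      have key : c' n + d n - d (n + 1) - b n = 0 := by
        have e1 : n + 1 - 1 = n := rfl
        rcases lt_or_ge n m with h | h
        · rw [vlt _ h]
          simp only [hddef]
          rw [if_pos (by omega : n ≤ m), if_pos (by omega : n + 1 ≤ m)]
          ring
        rcases eq_or_lt_of_le h with h | h
        · rw [← h, vm]
          have e2 : m + 1 - 1 = m := rfl
          simp only [hddef]
          rw [if_pos (le_refl m)]
          rcases le_or_gt (m + 1) k with h2 | h2
          · rw [if_neg (by omega), if_pos h2, e2]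
            ring
          · have hmk' : m = k := by omega
            rw [if_neg (by omega), if_neg (by omega), hmk']
            omega
        rcases lt_or_ge n k with h2 | h2
        · rw [vmid n h (le_of_lt h2)]
          simp only [hddef]
          rw [if_neg (by omega), if_pos (by omega : n ≤ k), if_neg (by omega),
            if_pos (by omega : n + 1 ≤ k), e1]
          ring
        rcases eq_or_lt_of_le h2 with h3 | h3
        · rw [vmid n h (by omega)]
          simp only [hddef]
          rw [if_neg (by omega), if_pos (by omega : n ≤ k), if_neg (by omega),
            if_neg (by omega), ← h3]
          omega
        · rw [vhi _ h3]
          simp only [hddef]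
          rw [if_neg (by omega), if_neg (by omega), if_neg (by omega), if_neg (by omega)]
          ring
      omega
  have hpsum : ∀ t, (q.psum t : ℤ) = (p.psum t : ℤ) + d t := by
    intro t
    have h1 : (q.psum t : ℤ) - (p.psum t : ℤ)
        = (∑ i ∈ Finset.range t, c i) - ∑ i ∈ Finset.range t, b i := by
      simp only [Ptn.psum, hbdef, hcdef, bseq]
      push_cast
      rw [← Finset.sum_sub_distrib, ← Finset.sum_sub_distrib]
      apply Finset.sum_congr rfl
      intro i _
      ring
    rw [hcc, hsum t] at h1
    omega
  have hd : ∀ t, 0 ≤ d t ∧ d t ≤ y - x := by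
    intro t
    simp only [hddef]
    split_ifs with h1 h2
    · omega
    · have hub : b (t - 1) ≤ b m := hb.antitone (by omega)
      have hlb : b k ≤ b (t - 1) := hb.antitone (by omega)
      omega
    · omega
  have hdK : ∀ t, k + 1 ≤ t → d t = y - x := by
    intro t ht
    simp only [hddef]
    rw [if_neg (by omega), if_neg (by omega)]
  constructor
  · intro t
    have := hpsum t
    have := hd t
    omega
  · exact ⟨k + 1, fun t ht => by have := hpsum t; have := hdK t ht; omega⟩

/-- The size of a partition is the sum of its parts. -/
lemma size_eq_psum (p : Ptn) (N : ℕ) (hN : ∀ i, N ≤ i → p.f i = 0) :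
    p.size = p.psum N := by
  classical
  have hset : {x : ℕ × ℕ | p.cell x.1 x.2}
      = ↑((Finset.range N).biUnion fun i => {i + 1} ×ˢ Finset.Icc 1 (p.f i)) := by
    ext ⟨r, cc⟩
    simp only [Set.mem_setOf_eq, Ptn.cell, Finset.coe_biUnion, Finset.coe_product,
      Set.mem_iUnion, Finset.mem_coe, Finset.mem_range, Set.mem_prod, Finset.coe_singleton,
      Set.mem_singleton_iff, Finset.coe_Icc, Set.mem_Icc]
    constructor
    · rintro ⟨h1, h2, h3⟩
      refine ⟨r - 1, ?_, by omega, h2, h3⟩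
      by_contra hcon
      rw [hN (r - 1) (by omega)] at h3
      omega
    · rintro ⟨i, hi, rfl, h2, h3⟩
      exact ⟨by omega, h2, by simpa using h3⟩
  rw [Ptn.size, hset, Set.ncard_coe_finset, Finset.card_biUnion]
  · apply Finset.sum_congr rfl
    intro i _
    rw [Finset.card_product, Finset.card_singleton, Nat.card_Icc]
    omega
  · intro i _ j _ hij
    simp only [Finset.disjoint_left]
    rintro ⟨r, cc⟩ h1 h2
    simp only [Finset.mem_product, Finset.mem_singleton] at h1 h2
    omega

/-- if `mu = s_{uv}(lam)` is obtained from `lam` by increasing one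
beta-number of the first component (adding a hook of size `y - x` to `lam⁽¹⁾`) and
decreasing one beta-number of the second component (removing a hook of the same
size from `lam⁽²⁾`), then `mu` strictly dominates `lam`. -/
theorem statement10 (e : ℕ) (he : 2 ≤ e) (a₁ a₂ : ℤ) (lam mu : Ptn × Ptn)
    (x y x' y' : ℤ) (hxy : x < y) (hx'y' : x' < y') (hsame : y - x = y' - x')
    (hx : x ∈ betaSet a₁ lam.1) (hy : y ∉ betaSet a₁ lam.1)
    (h1 : betaSet a₁ mu.1 = insert y (betaSet a₁ lam.1 \ {x}))
    (hy' : y' ∈ betaSet a₂ lam.2) (hx' : x' ∉ betaSet a₂ lam.2)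
    (h2 : betaSet a₂ mu.2 = insert x' (betaSet a₂ lam.2 \ {y'})) :
    bipDom mu lam ∧ mu ≠ lam := by
  -- component 1
  obtain ⟨hple1, K1, hK1⟩ := replace_psum a₁ lam.1 mu.1 x y hxy hx hy h1
  -- reverse relation for component 2
  have hx'mu : x' ∈ betaSet a₂ mu.2 := by rw [h2]; exact Set.mem_insert _ _
  have hy'mu : y' ∉ betaSet a₂ mu.2 := by
    rw [h2]
    rintro (h | ⟨-, h⟩)
    · omega
    · exact h rfl
  have h2' : betaSet a₂ lam.2 = insert y' (betaSet a₂ mu.2 \ {x'}) := by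
    rw [h2]
    ext v
    simp only [Set.mem_insert_iff, Set.mem_diff, Set.mem_singleton_iff]
    constructor
    · intro hv
      rcases eq_or_ne v y' with rfl | hne
      · left; rfl
      · right
        refine ⟨Or.inr ⟨hv, hne⟩, ?_⟩
        rintro rfl
        exact hx' hv
    · rintro (rfl | ⟨(rfl | ⟨hv, -⟩), hne⟩)
      · exact hy'
      · exact absurd rfl hne
      · exact hv
  obtain ⟨hple2, K2, hK2⟩ := replace_psum a₂ mu.2 lam.2 x' y' hx'y' hx'mu hy'mu h2'
  -- size of component 1
  obtain ⟨N1, hN1⟩ := lam.1.ev_zero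
  obtain ⟨N2, hN2⟩ := mu.1.ev_zero
  set N := max (max N1 N2) K1 with hNdef
  have hsz : (mu.1.size : ℤ) = (lam.1.size : ℤ) + (y - x) := by
    rw [size_eq_psum mu.1 N (fun i hi => hN2 i (by omega)),
      size_eq_psum lam.1 N (fun i hi => hN1 i (by omega))]
    exact hK1 N (by omega)
  refine ⟨⟨?_, ?_⟩, ?_⟩
  · intro t
    have := (hple1 t).1
    exact_mod_cast this
  · intro t
    have hA := (hple2 t).2
    have : (lam.1.size : ℤ) + (lam.2.psum t : ℤ) ≤ (mu.1.size : ℤ) + (mu.2.psum t : ℤ) := by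
      omega
    exact_mod_cast this
  · intro heq
    have : betaSet a₁ mu.1 = betaSet a₁ lam.1 := by rw [heq]
    rw [h1] at this
    exact hy (this ▸ Set.mem_insert y _)
end

section
/- Let h ≥ 0 and suppose B̂, B̂₁, B̂₂ are combinatorial blocks in the same Scopes-equivalence class with h(B̂) = h, and both ψ(B̂₁) and ψ(B̂₂) are h-Scopes-minimal. Then B̂₁ = B̂₂; i.e., each Scopes-equivalence class of combinatorial blocks contains a unique h-Scopes-minimal representative. -/
/-- The correction term `d` for the Scopes move between adjacent entries `x, y` of
the tuple `t`: `d = 2` if `min{n,p} > 0` and both entries are odd, else `d = 0`. -/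
def scopesD (np : ℕ) (x y : ℤ) : ℤ :=
  if 0 < np ∧ Odd x ∧ Odd y then 2 else 0

/-- A nontrivial Scopes move on the tuple `t ∈ ℤ^e` encoding a block (with `h` the
number of removable hooks and `np = min{n,p}`): either swap adjacent entries
`t_{i-1}, t_i` (for `1 ≤ i ≤ e−1`) provided `t_i − t_{i-1} ≥ 2h + d_i`, or replace
`t` by `(t_{e-1}+2, t_1, …, t_{e-2}, t_0−2)` provided `t_0 − t_{e-1} ≥ 2h + 2 + d_0`. -/
def ScMove (e h np : ℕ) (t t' : Fin e → ℤ) : Prop :=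
  t ≠ t' ∧
  ((∃ i j : Fin e, (j : ℕ) + 1 = (i : ℕ) ∧
      (2 * h : ℤ) + scopesD np (t j) (t i) ≤ t i - t j ∧
      t' = Function.update (Function.update t j (t i)) i (t j)) ∨
   (∃ z l : Fin e, (z : ℕ) = 0 ∧ (l : ℕ) = e - 1 ∧
      (2 * h + 2 : ℤ) + scopesD np (t l) (t z) ≤ t z - t l ∧
      t' = fun k => if k = z then t l + 2 else if k = l then t z - 2 else t k))

namespace Scopes

lemma scopesD_eq (np : ℕ) (x y : ℤ) :
    scopesD np x y = if 0 < np ∧ x % 2 = 1 ∧ y % 2 = 1 then 2 else 0 := by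
  unfold scopesD
  split_ifs with h1 h2 <;> simp_all [Int.odd_iff]

lemma scopesD_nonneg (np : ℕ) (x y : ℤ) : 0 ≤ scopesD np x y := by
  rw [scopesD_eq]; split_ifs <;> omega

variable {e h np : ℕ}

def swapF (t : Fin e → ℤ) (i j : Fin e) : Fin e → ℤ :=
  fun k => if k = i then t j else if k = j then t i else t k

def cycF (t : Fin e → ℤ) (z l : Fin e) : Fin e → ℤ :=
  fun k => if k = z then t l + 2 else if k = l then t z - 2 else t k

lemma update_eq_swapF (t : Fin e → ℤ) (i j : Fin e) :
    Function.update (Function.update t j (t i)) i (t j) = swapF t i j := by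
  funext k
  simp only [Function.update, swapF]
  split_ifs <;> simp_all

lemma fin_ne {a b : Fin e} (hab : (a : ℕ) ≠ (b : ℕ)) : a ≠ b :=
  fun hh => hab (by rw [hh])

lemma scMove_iff (t t' : Fin e → ℤ) : ScMove e h np t t' ↔
    ((∃ i j : Fin e, (j : ℕ) + 1 = (i : ℕ) ∧ t j < t i ∧
      (2 * h : ℤ) + scopesD np (t j) (t i) ≤ t i - t j ∧ t' = swapF t i j) ∨
     (∃ z l : Fin e, (z : ℕ) = 0 ∧ (l : ℕ) = e - 1 ∧ t l + 2 < t z ∧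
      (2 * h + 2 : ℤ) + scopesD np (t l) (t z) ≤ t z - t l ∧ t' = cycF t z l)) := by
  constructor
  · rintro ⟨hne, (⟨i, j, hij, hle, rfl⟩ | ⟨z, l, hz, hl, hle, rfl⟩)⟩
    · left
      refine ⟨i, j, hij, ?_, hle, update_eq_swapF t i j⟩
      have hd := scopesD_nonneg np (t j) (t i)
      rcases lt_or_ge (t j) (t i) with h' | h'
      · exact h'
      · exfalso
        have : t j = t i := le_antisymm (by omega) h'
        apply hne
        rw [update_eq_swapF]
        funext k
        simp only [swapF]
        split_ifs <;> simp_all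
    · right
      refine ⟨z, l, hz, hl, ?_, hle, rfl⟩
      have hd := scopesD_nonneg np (t l) (t z)
      rcases lt_or_ge (t l + 2) (t z) with h' | h'
      · exact h'
      · exfalso
        have hzl : t z = t l + 2 := by omega
        apply hne
        funext k
        split_ifs with h1 h2 <;> simp_all
  · rintro (⟨i, j, hij, hlt, hle, rfl⟩ | ⟨z, l, hz, hl, hlt, hle, rfl⟩)
    · refine ⟨?_, Or.inl ⟨i, j, hij, hle, (update_eq_swapF t i j).symm⟩⟩
      intro hEq
      have : t i = swapF t i j i := congrFun hEq i
      simp [swapF] at this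
      omega
    · refine ⟨?_, Or.inr ⟨z, l, hz, hl, hle, rfl⟩⟩
      intro hEq
      have : t z = cycF t z l z := congrFun hEq z
      simp [cycF] at this
      omega

/-! ### The measure -/

def nu (t : Fin e → ℤ) : ℤ := ∑ k : Fin e, ((e : ℤ) * (t k) ^ 2 + (k : ℤ) * t k)

lemma abs_le_sq (x : ℤ) : |x| ≤ x ^ 2 := by
  rcases eq_or_ne x 0 with rfl | hx
  · simp
  · have h1 : 1 ≤ |x| := Int.one_le_abs hx
    nlinarith [sq_abs x, abs_nonneg x]

lemma nu_nonneg (t : Fin e → ℤ) : 0 ≤ nu t := by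
  refine Finset.sum_nonneg fun k _ => ?_
  have h1 : |t k| ≤ (t k) ^ 2 := abs_le_sq (t k)
  have h2 : -|t k| ≤ t k := neg_abs_le (t k)
  have hk : ((k : ℕ) : ℤ) ≤ (e : ℤ) - 1 := by
    have := k.isLt; omega
  have hk0 : (0 : ℤ) ≤ ((k : ℕ) : ℤ) := by positivity
  have A : 0 ≤ ((k : ℕ) : ℤ) * (t k + |t k|) := mul_nonneg hk0 (by linarith)
  have B : 0 ≤ (e : ℤ) * ((t k) ^ 2 - |t k|) :=
    mul_nonneg (by positivity) (by linarith)
  have C : 0 ≤ ((e : ℤ) - 1 - (k : ℕ)) * |t k| :=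
    mul_nonneg (by linarith) (abs_nonneg _)
  nlinarith [abs_nonneg (t k)]

lemma sum_split (F : Fin e → ℤ) (i j : Fin e) (hij : i ≠ j) :
    ∑ k : Fin e, F k = F i + F j + ∑ k ∈ ({i, j} : Finset (Fin e))ᶜ, F k := by
  rw [← Finset.sum_add_sum_compl ({i, j} : Finset (Fin e)) F,
    Finset.sum_pair hij]

lemma nu_lt_of_move {t t' : Fin e → ℤ} (he : 2 ≤ e) (hmv : ScMove e h np t t') :
    nu t' < nu t := by
  rcases (scMove_iff t t').mp hmv with
    ⟨i, j, hij, hlt, hle, rfl⟩ | ⟨z, l, hz, hl, hlt, hle, rfl⟩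
  · have hne : i ≠ j := fin_ne (by omega)
    have hij' : ((i : ℕ) : ℤ) = ((j : ℕ) : ℤ) + 1 := by omega
    unfold nu
    rw [sum_split (fun k => (e : ℤ) * (swapF t i j k) ^ 2 + (k : ℤ) * swapF t i j k) i j hne,
      sum_split (fun k => (e : ℤ) * (t k) ^ 2 + (k : ℤ) * t k) i j hne]
    have hcompl : ∑ k ∈ ({i, j} : Finset (Fin e))ᶜ,
        ((e : ℤ) * (swapF t i j k) ^ 2 + (k : ℤ) * swapF t i j k)
        = ∑ k ∈ ({i, j} : Finset (Fin e))ᶜ, ((e : ℤ) * (t k) ^ 2 + (k : ℤ) * t k) := by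
      refine Finset.sum_congr rfl fun k hk => ?_
      simp only [Finset.mem_compl, Finset.mem_insert, Finset.mem_singleton, not_or] at hk
      simp only [swapF, if_neg hk.1, if_neg hk.2]
    rw [hcompl]
    have e1 : swapF t i j i = t j := by simp [swapF]
    have e2 : swapF t i j j = t i := by simp [swapF, hne.symm]
    rw [e1, e2, hij']
    nlinarith [hlt]
  · have hne : z ≠ l := fin_ne (by omega)
    have hz' : ((z : ℕ) : ℤ) = 0 := by omega
    have hl' : ((l : ℕ) : ℤ) = (e : ℤ) - 1 := by omega
    unfold nu
    rw [sum_split (fun k => (e : ℤ) * (cycF t z l k) ^ 2 + (k : ℤ) * cycF t z l k) z l hne,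
      sum_split (fun k => (e : ℤ) * (t k) ^ 2 + (k : ℤ) * t k) z l hne]
    have hcompl : ∑ k ∈ ({z, l} : Finset (Fin e))ᶜ,
        ((e : ℤ) * (cycF t z l k) ^ 2 + (k : ℤ) * cycF t z l k)
        = ∑ k ∈ ({z, l} : Finset (Fin e))ᶜ, ((e : ℤ) * (t k) ^ 2 + (k : ℤ) * t k) := by
      refine Finset.sum_congr rfl fun k hk => ?_
      simp only [Finset.mem_compl, Finset.mem_insert, Finset.mem_singleton, not_or] at hk
      simp only [cycF, if_neg hk.1, if_neg hk.2]
    rw [hcompl]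
    have e1 : cycF t z l z = t l + 2 := by simp [cycF]
    have e2 : cycF t z l l = t z - 2 := by simp [cycF, hne.symm]
    rw [e1, e2, hz', hl']
    have hD : 1 ≤ t z - t l - 2 := by omega
    have hpos : 0 < (3 * (e : ℤ) + 1) * (t z - t l - 2) := by
      apply mul_pos (by positivity) (by omega)
    nlinarith [hpos]


open Relation

lemma mkSwap {t : Fin e → ℤ} (i j : Fin e) (hij : (j : ℕ) + 1 = (i : ℕ))
    (hlt : t j < t i) (hle : (2 * h : ℤ) + scopesD np (t j) (t i) ≤ t i - t j) :
    ScMove e h np t (swapF t i j) :=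
  (scMove_iff t _).mpr (Or.inl ⟨i, j, hij, hlt, hle, rfl⟩)

lemma mkCyc {t : Fin e → ℤ} (z l : Fin e) (hz : (z : ℕ) = 0) (hl : (l : ℕ) = e - 1)
    (hlt : t l + 2 < t z) (hle : (2 * h + 2 : ℤ) + scopesD np (t l) (t z) ≤ t z - t l) :
    ScMove e h np t (cycF t z l) :=
  (scMove_iff t _).mpr (Or.inr ⟨z, l, hz, hl, hlt, hle, rfl⟩)

-- value lemmas
lemma swapF_i (t : Fin e → ℤ) (i j : Fin e) : swapF t i j i = t j := by simp [swapF]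
lemma swapF_j (t : Fin e → ℤ) {i j : Fin e} (hji : j ≠ i) : swapF t i j j = t i := by
  simp [swapF, hji]
lemma swapF_k (t : Fin e → ℤ) {i j k : Fin e} (h1 : k ≠ i) (h2 : k ≠ j) :
    swapF t i j k = t k := by simp [swapF, h1, h2]
lemma cycF_z (t : Fin e → ℤ) (z l : Fin e) : cycF t z l z = t l + 2 := by simp [cycF]
lemma cycF_l (t : Fin e → ℤ) {z l : Fin e} (hlz : l ≠ z) : cycF t z l l = t z - 2 := by
  simp [cycF, hlz]
lemma cycF_k (t : Fin e → ℤ) {z l k : Fin e} (h1 : k ≠ z) (h2 : k ≠ l) :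
    cycF t z l k = t k := by simp [cycF, h1, h2]

open Relation

/-- swap-swap local confluence, ordered. -/
lemma conf_ss (t : Fin e → ℤ) (i j i' j' : Fin e)
    (hij : (j : ℕ) + 1 = (i : ℕ)) (hij' : (j' : ℕ) + 1 = (i' : ℕ))
    (hord : (i : ℕ) ≤ (i' : ℕ))
    (hlt1 : t j < t i) (h1 : (2 * h : ℤ) + scopesD np (t j) (t i) ≤ t i - t j)
    (hlt2 : t j' < t i') (h2 : (2 * h : ℤ) + scopesD np (t j') (t i') ≤ t i' - t j') :
    ∃ w, ReflTransGen (ScMove e h np) (swapF t i j) w ∧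
      ReflTransGen (ScMove e h np) (swapF t i' j') w := by
  rcases eq_or_lt_of_le hord with heq | hlt
  · have hii : i = i' := Fin.val_injective heq
    have hjj : j = j' := Fin.val_injective (by omega)
    subst hii; subst hjj
    exact ⟨swapF t i j, ReflTransGen.refl, ReflTransGen.refl⟩
  rcases eq_or_lt_of_le (Nat.succ_le_of_lt hlt) with hadj | hfar
  · -- braid: i' = i+1, j' = i
    have hj'i : i = j' := Fin.val_injective (by omega)
    subst hj'i
    have hji : j ≠ i := fin_ne (by omega)
    have hji' : j ≠ i' := fin_ne (by omega)
    have hii' : i ≠ i' := fin_ne (by omega)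
    have hui : swapF t i j i = t j := swapF_i t i j
    have huj : swapF t i j j = t i := swapF_j t hji
    have hui' : swapF t i j i' = t i' := swapF_k t hii'.symm hji'.symm
    have hvi' : swapF t i' i i' = t i := swapF_i t i' i
    have hvi : swapF t i' i i = t i' := swapF_j t hii'
    have hvj : swapF t i' i j = t j := swapF_k t hji' hji
    have key1 : t j < t i' := by omega
    have key2 : (2 * h : ℤ) + scopesD np (t j) (t i') ≤ t i' - t j := by
      simp only [scopesD_eq] at h1 h2 ⊢
      split_ifs at h1 h2 ⊢ <;> omega
    -- chain from u = swapF t i j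
    have step1 : ScMove e h np (swapF t i j) (swapF (swapF t i j) i' i) := by
      apply mkSwap i' i hij' <;> rw [hui, hui']
      · exact key1
      · exact key2
    have hu2j : swapF (swapF t i j) i' i j = t i := by
      rw [swapF_k _ hji' hji, huj]
    have hu2i : swapF (swapF t i j) i' i i = t i' := by
      rw [swapF_j _ hii', hui']
    have step2 : ScMove e h np (swapF (swapF t i j) i' i)
        (swapF (swapF (swapF t i j) i' i) i j) := by
      apply mkSwap i j hij <;> rw [hu2j, hu2i]
      · exact hlt2
      · exact h2
    -- chain from v = swapF t i' i
    have step3 : ScMove e h np (swapF t i' i) (swapF (swapF t i' i) i j) := by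
      apply mkSwap i j hij <;> rw [hvj, hvi]
      · exact key1
      · exact key2
    have hv2i' : swapF (swapF t i' i) i j i' = t i := by
      rw [swapF_k _ hii'.symm hji'.symm, hvi']
    have hv2i : swapF (swapF t i' i) i j i = t j := by
      rw [swapF_i, hvj]
    have step4 : ScMove e h np (swapF (swapF t i' i) i j)
        (swapF (swapF (swapF t i' i) i j) i' i) := by
      apply mkSwap i' i hij' <;> rw [hv2i, hv2i']
      · exact hlt1
      · exact h1
    have heqw : swapF (swapF (swapF t i' i) i j) i' i
        = swapF (swapF (swapF t i j) i' i) i j := by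
      funext k
      simp only [swapF]
      split_ifs <;> subst_vars <;> omega
    exact ⟨swapF (swapF (swapF t i j) i' i) i j,
      ReflTransGen.head step1 (ReflTransGen.single step2),
      heqw ▸ ReflTransGen.head step3 (ReflTransGen.single step4)⟩
  · -- disjoint: i+1 ≤ j' < i'
    have hd1 : j' ≠ i := fin_ne (by omega)
    have hd2 : j' ≠ j := fin_ne (by omega)
    have hd3 : i' ≠ i := fin_ne (by omega)
    have hd4 : i' ≠ j := fin_ne (by omega)
    have e1 : swapF t i j j' = t j' := swapF_k t hd1 hd2
    have e2 : swapF t i j i' = t i' := swapF_k t hd3 hd4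
    have e3' : swapF t i' j' j = t j := swapF_k t hd4.symm hd2.symm
    have e4 : swapF t i' j' i = t i := swapF_k t hd3.symm hd1.symm
    have step1 : ScMove e h np (swapF t i j) (swapF (swapF t i j) i' j') := by
      apply mkSwap i' j' hij' <;> rw [e1, e2]
      · exact hlt2
      · exact h2
    have step2 : ScMove e h np (swapF t i' j') (swapF (swapF t i' j') i j) := by
      apply mkSwap i j hij <;> rw [e3', e4]
      · exact hlt1
      · exact h1
    have heqw : swapF (swapF t i' j') i j = swapF (swapF t i j) i' j' := by
      funext k
      simp only [swapF]
      split_ifs <;> subst_vars <;> omega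
    exact ⟨swapF (swapF t i j) i' j', ReflTransGen.single step1,
      heqw ▸ ReflTransGen.single step2⟩

/-- swap-cyc local confluence. -/
lemma conf_sc (he : 2 ≤ e) (t : Fin e → ℤ) (i j z l : Fin e)
    (hij : (j : ℕ) + 1 = (i : ℕ)) (hz : (z : ℕ) = 0) (hl : (l : ℕ) = e - 1)
    (hlt1 : t j < t i) (h1 : (2 * h : ℤ) + scopesD np (t j) (t i) ≤ t i - t j)
    (hlt2 : t l + 2 < t z)
    (h2 : (2 * h + 2 : ℤ) + scopesD np (t l) (t z) ≤ t z - t l) :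
    ∃ w, ReflTransGen (ScMove e h np) (swapF t i j) w ∧
      ReflTransGen (ScMove e h np) (cycF t z l) w := by
  by_cases hj0 : (j : ℕ) = 0
  · -- j = z
    have hzj : j = z := Fin.val_injective (by omega)
    subst hzj
    by_cases hie : (i : ℕ) = e - 1
    · -- e = 2 : both moves at the same two positions, contradiction
      have hil : i = l := Fin.val_injective (by omega)
      exfalso
      rw [hil] at hlt1
      omega
    · -- braid at positions z=j (0), i (1), l (e-1), with e ≥ 3
      have hji : j ≠ i := fin_ne (by omega)
      have hjl : j ≠ l := fin_ne (by omega)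
      have hil : i ≠ l := fin_ne (by omega)
      -- u = swapF t i j values
      have hui : swapF t i j i = t j := swapF_i t i j
      have huj : swapF t i j j = t i := swapF_j t hji
      have hul : swapF t i j l = t l := swapF_k t hil.symm hjl.symm
      -- v = cycF t j l values
      have hvj : cycF t j l j = t l + 2 := cycF_z t j l
      have hvl : cycF t j l l = t j - 2 := cycF_l t hjl.symm
      have hvi : cycF t j l i = t i := cycF_k t hji.symm hil
      -- arithmetic
      have a1 : t l + 2 < t i := by omega
      have a2 : (2 * h + 2 : ℤ) + scopesD np (t l) (t i) ≤ t i - t l := by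
        simp only [scopesD_eq] at h1 h2 ⊢
        split_ifs at h1 h2 ⊢ <;> omega
      have a3 : (2 * h : ℤ) + scopesD np (t l + 2) (t j) ≤ t j - (t l + 2) := by
        simp only [scopesD_eq] at h1 h2 ⊢
        split_ifs at h1 h2 ⊢ <;> omega
      have a4 : (2 * h : ℤ) + scopesD np (t l + 2) (t i) ≤ t i - (t l + 2) := by
        simp only [scopesD_eq] at h1 h2 ⊢
        split_ifs at h1 h2 ⊢ <;> omega
      have a5 : (2 * h + 2 : ℤ) + scopesD np (t j - 2) (t i) ≤ t i - (t j - 2) := by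
        simp only [scopesD_eq] at h1 h2 ⊢
        split_ifs at h1 h2 ⊢ <;> omega
      -- chain from u
      have step1 : ScMove e h np (swapF t i j) (cycF (swapF t i j) j l) := by
        apply mkCyc j l hz hl <;> rw [hul, huj]
        · exact a1
        · exact a2
      have hu2j : cycF (swapF t i j) j l j = t l + 2 := by
        rw [cycF_z, hul]
      have hu2i : cycF (swapF t i j) j l i = t j := by
        rw [cycF_k _ hji.symm hil, hui]
      have step2 : ScMove e h np (cycF (swapF t i j) j l)
          (swapF (cycF (swapF t i j) j l) i j) := by
        apply mkSwap i j hij <;> rw [hu2j, hu2i]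
        · omega
        · exact a3
      -- chain from v
      have step3 : ScMove e h np (cycF t j l) (swapF (cycF t j l) i j) := by
        apply mkSwap i j hij <;> rw [hvj, hvi]
        · omega
        · exact a4
      have hv2j : swapF (cycF t j l) i j j = t i := by
        rw [swapF_j _ hji, hvi]
      have hv2l : swapF (cycF t j l) i j l = t j - 2 := by
        rw [swapF_k _ hil.symm hjl.symm, hvl]
      have step4 : ScMove e h np (swapF (cycF t j l) i j)
          (cycF (swapF (cycF t j l) i j) j l) := by
        apply mkCyc j l hz hl <;> rw [hv2j, hv2l]
        · omega
        · exact a5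
      have heqw : cycF (swapF (cycF t j l) i j) j l
          = swapF (cycF (swapF t i j) j l) i j := by
        funext k
        simp only [swapF, cycF]
        split_ifs <;> subst_vars <;> omega
      exact ⟨swapF (cycF (swapF t i j) j l) i j,
        ReflTransGen.head step1 (ReflTransGen.single step2),
        heqw ▸ ReflTransGen.head step3 (ReflTransGen.single step4)⟩
  · by_cases hie : (i : ℕ) = e - 1
    · -- i = l : braid at positions z (0), j (e-2), i (e-1), with e ≥ 3
      have hil : i = l := Fin.val_injective (by omega)
      subst hil
      have hji : j ≠ i := fin_ne (by omega)
      have hjz : j ≠ z := fin_ne (by omega)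
      have hiz : i ≠ z := fin_ne (by omega)
      -- u = swapF t i j values
      have hui : swapF t i j i = t j := swapF_i t i j
      have huj : swapF t i j j = t i := swapF_j t hji
      have huz : swapF t i j z = t z := swapF_k t hiz.symm hjz.symm
      -- v = cycF t z i values
      have hvz : cycF t z i z = t i + 2 := cycF_z t z i
      have hvi : cycF t z i i = t z - 2 := cycF_l t hiz
      have hvj : cycF t z i j = t j := cycF_k t hjz hji
      -- arithmetic
      have a6 : t j + 2 < t z := by omega
      have a7 : (2 * h + 2 : ℤ) + scopesD np (t j) (t z) ≤ t z - t j := by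
        simp only [scopesD_eq] at h1 h2 ⊢
        split_ifs at h1 h2 ⊢ <;> omega
      have a8 : (2 * h : ℤ) + scopesD np (t i) (t z - 2) ≤ (t z - 2) - t i := by
        simp only [scopesD_eq] at h1 h2 ⊢
        split_ifs at h1 h2 ⊢ <;> omega
      have a9 : (2 * h : ℤ) + scopesD np (t j) (t z - 2) ≤ (t z - 2) - t j := by
        simp only [scopesD_eq] at h1 h2 ⊢
        split_ifs at h1 h2 ⊢ <;> omega
      have a10 : (2 * h + 2 : ℤ) + scopesD np (t j) (t i + 2) ≤ (t i + 2) - t j := by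
        simp only [scopesD_eq] at h1 h2 ⊢
        split_ifs at h1 h2 ⊢ <;> omega
      -- chain from u
      have step1 : ScMove e h np (swapF t i j) (cycF (swapF t i j) z i) := by
        apply mkCyc z i hz hl <;> rw [hui, huz]
        · exact a6
        · exact a7
      have hu2j : cycF (swapF t i j) z i j = t i := by
        rw [cycF_k _ hjz hji, huj]
      have hu2i : cycF (swapF t i j) z i i = t z - 2 := by
        rw [cycF_l _ hiz, huz]
      have step2 : ScMove e h np (cycF (swapF t i j) z i)
          (swapF (cycF (swapF t i j) z i) i j) := by
        apply mkSwap i j hij <;> rw [hu2j, hu2i]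
        · omega
        · exact a8
      -- chain from v
      have step3 : ScMove e h np (cycF t z i) (swapF (cycF t z i) i j) := by
        apply mkSwap i j hij <;> rw [hvj, hvi]
        · omega
        · exact a9
      have hv2z : swapF (cycF t z i) i j z = t i + 2 := by
        rw [swapF_k _ hiz.symm hjz.symm, hvz]
      have hv2i : swapF (cycF t z i) i j i = t j := by
        rw [swapF_i, hvj]
      have step4 : ScMove e h np (swapF (cycF t z i) i j)
          (cycF (swapF (cycF t z i) i j) z i) := by
        apply mkCyc z i hz hl <;> rw [hv2z, hv2i]
        · omega
        · exact a10
      have heqw : cycF (swapF (cycF t z i) i j) z i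
          = swapF (cycF (swapF t i j) z i) i j := by
        funext k
        simp only [swapF, cycF]
        split_ifs <;> subst_vars <;> omega
      exact ⟨swapF (cycF (swapF t i j) z i) i j,
        ReflTransGen.head step1 (ReflTransGen.single step2),
        heqw ▸ ReflTransGen.head step3 (ReflTransGen.single step4)⟩
    · -- disjoint: 1 ≤ j, i ≤ e-2
      have hjz : j ≠ z := fin_ne (by omega)
      have hjl : j ≠ l := fin_ne (by omega)
      have hiz : i ≠ z := fin_ne (by omega)
      have hil : i ≠ l := fin_ne (by omega)
      have huz : swapF t i j z = t z := swapF_k t hiz.symm hjz.symm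
      have hul : swapF t i j l = t l := swapF_k t hil.symm hjl.symm
      have hvj : cycF t z l j = t j := cycF_k t hjz hjl
      have hvi : cycF t z l i = t i := cycF_k t hiz hil
      have step1 : ScMove e h np (swapF t i j) (cycF (swapF t i j) z l) := by
        apply mkCyc z l hz hl <;> rw [hul, huz]
        · exact hlt2
        · exact h2
      have step2 : ScMove e h np (cycF t z l) (swapF (cycF t z l) i j) := by
        apply mkSwap i j hij <;> rw [hvj, hvi]
        · exact hlt1
        · exact h1
      have hji : j ≠ i := fin_ne (by omega)
      have hlz : l ≠ z := fin_ne (by omega)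
      have heqw : swapF (cycF t z l) i j = cycF (swapF t i j) z l := by
        funext k
        by_cases hki : k = i
        · subst hki; rw [swapF_i, hvj, cycF_k _ hiz hil, swapF_i]
        by_cases hkj : k = j
        · subst hkj; rw [swapF_j _ hji, hvi, cycF_k _ hjz hjl, swapF_j _ hji]
        by_cases hkz : k = z
        · subst hkz; rw [swapF_k _ hki hkj, cycF_z, cycF_z, hul]
        by_cases hkl : k = l
        · subst hkl; rw [swapF_k _ hki hkj, cycF_l _ hlz, cycF_l _ hlz, huz]
        · rw [swapF_k _ hki hkj, cycF_k _ hkz hkl, cycF_k _ hkz hkl, swapF_k _ hki hkj]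
      exact ⟨cycF (swapF t i j) z l, ReflTransGen.single step1,
        heqw ▸ ReflTransGen.single step2⟩




lemma local_confluence (he : 2 ≤ e) {t u v : Fin e → ℤ}
    (hu : ScMove e h np t u) (hv : ScMove e h np t v) :
    ∃ w, ReflTransGen (ScMove e h np) u w ∧ ReflTransGen (ScMove e h np) v w := by
  rcases (scMove_iff t u).mp hu with
    ⟨i, j, hij, hlt1, hle1, rfl⟩ | ⟨z, l, hz, hl, hlt1, hle1, rfl⟩
  · rcases (scMove_iff t v).mp hv with
      ⟨i', j', hij', hlt2, hle2, rfl⟩ | ⟨z, l, hz, hl, hlt2, hle2, rfl⟩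
    · rcases le_total (i : ℕ) (i' : ℕ) with hord | hord
      · exact conf_ss t i j i' j' hij hij' hord hlt1 hle1 hlt2 hle2
      · obtain ⟨w, hw1, hw2⟩ := conf_ss t i' j' i j hij' hij hord hlt2 hle2 hlt1 hle1
        exact ⟨w, hw2, hw1⟩
    · exact conf_sc he t i j z l hij hz hl hlt1 hle1 hlt2 hle2
  · rcases (scMove_iff t v).mp hv with
      ⟨i', j', hij', hlt2, hle2, rfl⟩ | ⟨z', l', hz', hl', hlt2, hle2, rfl⟩
    · obtain ⟨w, hw1, hw2⟩ := conf_sc he t i' j' z l hij' hz hl hlt2 hle2 hlt1 hle1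
      exact ⟨w, hw2, hw1⟩
    · have h1 : z = z' := Fin.val_injective (by omega)
      have h2 : l = l' := Fin.val_injective (by omega)
      subst h1; subst h2
      exact ⟨cycF t z l, ReflTransGen.refl, ReflTransGen.refl⟩

lemma nu_le_of_rtg (he : 2 ≤ e) {t u : Fin e → ℤ}
    (hr : ReflTransGen (ScMove e h np) t u) : nu u ≤ nu t := by
  induction hr with
  | refl => exact le_refl _
  | tail _ hstep ih => exact le_trans (le_of_lt (nu_lt_of_move he hstep)) ih

lemma newman (he : 2 ≤ e) : ∀ N : ℕ, ∀ t u v : Fin e → ℤ, (nu t).toNat ≤ N →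
    ReflTransGen (ScMove e h np) t u → ReflTransGen (ScMove e h np) t v →
    ∃ w, ReflTransGen (ScMove e h np) u w ∧ ReflTransGen (ScMove e h np) v w := by
  intro N
  induction N with
  | zero =>
    intro t u v hN hu hv
    have hnomove : ∀ x, ¬ ScMove e h np t x := by
      intro x hx
      have h1 := nu_lt_of_move he hx
      have h2 := nu_nonneg x
      omega
    rcases ReflTransGen.cases_head hu with rfl | ⟨u₁, hu₁, _⟩
    · rcases ReflTransGen.cases_head hv with rfl | ⟨v₁, hv₁, _⟩
      · exact ⟨t, ReflTransGen.refl, ReflTransGen.refl⟩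
      · exact absurd hv₁ (hnomove v₁)
    · exact absurd hu₁ (hnomove u₁)
  | succ N ih =>
    intro t u v hN hu hv
    rcases ReflTransGen.cases_head hu with rfl | ⟨u₁, hu₁, hu₂⟩
    · exact ⟨v, hv, ReflTransGen.refl⟩
    rcases ReflTransGen.cases_head hv with rfl | ⟨v₁, hv₁, hv₂⟩
    · exact ⟨u, ReflTransGen.refl, hu⟩
    obtain ⟨d, hud, hvd⟩ := local_confluence he hu₁ hv₁
    have hu₁N : (nu u₁).toNat ≤ N := by
      have h1 := nu_lt_of_move he hu₁
      have h2 := nu_nonneg u₁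
      omega
    have hv₁N : (nu v₁).toNat ≤ N := by
      have h1 := nu_lt_of_move he hv₁
      have h2 := nu_nonneg v₁
      omega
    obtain ⟨x, hux, hdx⟩ := ih u₁ u d hu₁N hu₂ hud
    have hv₁x : ReflTransGen (ScMove e h np) v₁ x := hvd.trans hdx
    obtain ⟨y, hvy, hxy⟩ := ih v₁ v x hv₁N hv₂ hv₁x
    exact ⟨y, hux.trans hxy, hvy⟩

lemma confluence (he : 2 ≤ e) {t u v : Fin e → ℤ}
    (hu : ReflTransGen (ScMove e h np) t u) (hv : ReflTransGen (ScMove e h np) t v) :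
    ∃ w, ReflTransGen (ScMove e h np) u w ∧ ReflTransGen (ScMove e h np) v w :=
  newman he (nu t).toNat t u v le_rfl hu hv

theorem main (he : 2 ≤ e) (t t₁ t₂ : Fin e → ℤ)
    (h1 : Relation.EqvGen (ScMove e h np) t t₁)
    (h2 : Relation.EqvGen (ScMove e h np) t t₂)
    (m1 : ¬ ∃ u, ScMove e h np t₁ u)
    (m2 : ¬ ∃ u, ScMove e h np t₂ u) :
    t₁ = t₂ := by
  have h12 : EqvGen (ScMove e h np) t₁ t₂ := (EqvGen.symm _ _ h1).trans _ _ _ h2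
  have hequiv : Equivalence (Join (ReflTransGen (ReflTransGen (ScMove e h np)))) :=
    Relation.equivalence_join_reflTransGen (fun a b c hab hac => by
      obtain ⟨d, hbd, hcd⟩ := confluence he hab hac
      exact ⟨d, ReflGen.single hbd, ReflTransGen.single hcd⟩)
  rw [Relation.reflTransGen_idem] at hequiv
  have h12' : EqvGen (Join (ReflTransGen (ScMove e h np))) t₁ t₂ :=
    Relation.EqvGen.mono (r := ScMove e h np) (p := Join (ReflTransGen (ScMove e h np)))
      (fun a b hab =>
      ⟨b, ReflTransGen.single hab, ReflTransGen.refl⟩) _ _ h12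
  have hJ : Join (ReflTransGen (ScMove e h np)) t₁ t₂ :=
    (Equivalence.eqvGen_iff hequiv).mp h12'
  obtain ⟨w, hw1, hw2⟩ := hJ
  have e1 : t₁ = w := by
    rcases ReflTransGen.cases_head hw1 with rfl | ⟨c, hc, _⟩
    · rfl
    · exact absurd ⟨c, hc⟩ m1
  have e2 : t₂ = w := by
    rcases ReflTransGen.cases_head hw2 with rfl | ⟨c, hc, _⟩
    · rfl
    · exact absurd ⟨c, hc⟩ m2
  rw [e1, e2]


end Scopes

/-- in each equivalence class of tuples generated by the Scopes moves,
there is at most one `h`-Scopes-minimal element (one admitting no nontrivial move);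
i.e., each Scopes-equivalence class of combinatorial blocks contains a unique
`h`-Scopes-minimal representative. -/
theorem statement15 (e h n p : ℕ) (he : 2 ≤ e)
    (t t₁ t₂ : Fin e → ℤ)
    (h1 : Relation.EqvGen (ScMove e h (min n p)) t t₁)
    (h2 : Relation.EqvGen (ScMove e h (min n p)) t t₂)
    (m1 : ¬ ∃ u, ScMove e h (min n p) t₁ u)
    (m2 : ¬ ∃ u, ScMove e h (min n p) t₂ u) :
    t₁ = t₂ :=
  Scopes.main he t t₁ t₂ h1 h2 m1 m2
end

section
/- Let A be a finite-dimensional algebra over an algebraically closed field and let I be an ideal of A generated by central elements lying in the Jacobson radical of A. Then A is Schurian-finite (i.e. has only finitely many isomorphism classes of bricks) if and only if A/I is Schurian-finite. -/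
/-- A brick (Schurian module): a finite-dimensional module `M` with
`End_A(M) ≅ 𝔽`, i.e. the structure map `𝔽 → End_A(M)` is bijective. -/
def IsBrick (𝔽 A : Type) [Field 𝔽] [Ring A] [Algebra 𝔽 A] (M : ModuleCat.{0} A) : Prop :=
  Module.Finite A M ∧
  (∀ φ : M →ₗ[A] M, ∃ c : 𝔽, ∀ x : M, φ x = algebraMap 𝔽 A c • x) ∧
  (∀ c c' : 𝔽, (∀ x : M, algebraMap 𝔽 A c • x = algebraMap 𝔽 A c' • x) → c = c')

/-- `A` is Schurian-finite: it has only finitely many isomorphism classes of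
bricks. -/
def SchurianFinite (𝔽 A : Type) [Field 𝔽] [Ring A] [Algebra 𝔽 A] : Prop :=
  ∃ (k : ℕ) (rep : Fin k → ModuleCat.{0} A),
    ∀ M : ModuleCat.{0} A, IsBrick 𝔽 A M → ∃ i, Nonempty (M ≅ rep i)

section Aux

variable {𝔽 A B : Type} [Field 𝔽] [Ring A] [Ring B] [Algebra 𝔽 A] [Algebra 𝔽 B]
  (π : A →ₐ[𝔽] B)

lemma restrict_algebraMap_smul (N : ModuleCat.{0} B) (c : 𝔽)
    (x : ((ModuleCat.restrictScalars π.toRingHom).obj N)) :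
    (algebraMap 𝔽 A c) • x = (algebraMap 𝔽 B c) • (show N from x) := by
  show (π (algebraMap 𝔽 A c)) • (show N from x) = (algebraMap 𝔽 B c) • (show N from x)
  rw [π.commutes]

/-- Restriction of scalars along a surjective map sends bricks to bricks. -/
lemma isBrick_restrict (hsurj : Function.Surjective π) (N : ModuleCat.{0} B)
    (hN : IsBrick 𝔽 B N) :
    IsBrick 𝔽 A ((ModuleCat.restrictScalars π.toRingHom).obj N) := by
  obtain ⟨hfin, hend, hsep⟩ := hN
  refine ⟨?_, ?_, ?_⟩
  · -- finiteness
    rw [Module.finite_def, Submodule.fg_def]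
    obtain ⟨s, hsfin, hs⟩ := Submodule.fg_def.mp hfin.fg_top
    let s' : Set ((ModuleCat.restrictScalars π.toRingHom).obj N) := s
    refine ⟨s', hsfin, ?_⟩
    rw [eq_top_iff]
    intro x _
    have hx : x ∈ Submodule.span B s := by rw [hs]; trivial
    let p : Submodule B ((ModuleCat.restrictScalars π.toRingHom).obj N) :=
      { carrier := (Submodule.span A s' : Set _)
        add_mem' := fun {y z} h1 h2 => Submodule.add_mem _ h1 h2
        zero_mem' := Submodule.zero_mem _
        smul_mem' := by
          intro b y hy
          obtain ⟨a, rfl⟩ := hsurj b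
          exact Submodule.smul_mem (Submodule.span A s') a hy }
    have hle : Submodule.span B s' ≤ p :=
      Submodule.span_le.2 (Submodule.subset_span (R := A))
    exact hle hx
  · intro φ
    let ψ : N →ₗ[B] N :=
      { toFun := φ
        map_add' := φ.map_add
        map_smul' := by
          intro b x
          obtain ⟨a, rfl⟩ := hsurj b
          exact φ.map_smul a x }
    obtain ⟨c, hc⟩ := hend ψ
    refine ⟨c, fun x => ?_⟩
    rw [restrict_algebraMap_smul]
    exact hc x
  · intro c c' h
    refine hsep c c' fun x => ?_
    have h1 := h x
    exact (restrict_algebraMap_smul π N c x).symm.trans (h1.trans (restrict_algebraMap_smul π N c' x))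

/-- An `A`-linear iso between restrictions of `B`-modules upgrades to a `B`-iso. -/
lemma iso_of_restrict_iso (hsurj : Function.Surjective π) (M N : ModuleCat.{0} B)
    (e : (ModuleCat.restrictScalars π.toRingHom).obj M ≅
      (ModuleCat.restrictScalars π.toRingHom).obj N) : Nonempty (M ≅ N) := by
  let f := e.toLinearEquiv
  refine ⟨LinearEquiv.toModuleIso (X₁ := M) (X₂ := N) ?_⟩
  exact
    { toFun := f
      invFun := f.symm
      left_inv := f.left_inv
      right_inv := f.right_inv
      map_add' := f.map_add
      map_smul' := by
        intro b x
        obtain ⟨a, rfl⟩ := hsurj b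
        exact f.map_smul a x }

end Aux

/-- Eisele–Janssens–Raedschelders reduction: let `A` be a
finite-dimensional algebra over an algebraically closed field and let `I` be the
(two-sided) ideal of `A` generated by a set `S` of central elements lying in the
Jacobson radical (i.e. `1 - a·s` is a unit for all `a`).  If `π : A → B` is a
surjection with kernel `I` (so `B ≅ A/I`), then `A` is Schurian-finite if and only
if `B ≅ A/I` is Schurian-finite. -/
theorem statement17 (𝔽 A B : Type) [Field 𝔽] [IsAlgClosed 𝔽]
    [Ring A] [Ring B] [Algebra 𝔽 A] [Algebra 𝔽 B]
    [FiniteDimensional 𝔽 A]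
    (S : Set A) (hcen : S ⊆ Set.center A)
    (hrad : ∀ s ∈ S, ∀ a : A, IsUnit (1 - a * s))
    (π : A →ₐ[𝔽] B) (hsurj : Function.Surjective π)
    (hker : ∀ x : A, π x = 0 ↔
      ∃ (n : ℕ) (a b s : Fin n → A), (∀ i, s i ∈ S) ∧ x = ∑ i, a i * s i * b i) :
    SchurianFinite 𝔽 A ↔ SchurianFinite 𝔽 B := by
  classical
  constructor
  · rintro ⟨k, rep, hrep⟩
    let P : Fin k → Prop := fun i => ∃ N : ModuleCat.{0} B, IsBrick 𝔽 B N ∧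
      Nonempty ((ModuleCat.restrictScalars π.toRingHom).obj N ≅ rep i)
    refine ⟨k, fun i => if h : P i then h.choose else ModuleCat.of B B, fun M hM => ?_⟩
    obtain ⟨i, ⟨e⟩⟩ := hrep _ (isBrick_restrict π hsurj M hM)
    have hPi : P i := ⟨M, hM, ⟨e⟩⟩
    obtain ⟨hbrick, ⟨e'⟩⟩ := hPi.choose_spec
    refine ⟨i, ?_⟩
    show Nonempty (M ≅ (if h : P i then h.choose else ModuleCat.of B B))
    rw [dif_pos hPi]
    exact iso_of_restrict_iso π hsurj M hPi.choose (e ≪≫ e'.symm)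
  · rintro ⟨k, rep, hrep⟩
    refine ⟨k, fun i => (ModuleCat.restrictScalars π.toRingHom).obj (rep i), fun M hM => ?_⟩
    obtain ⟨hfin, hend, hsep⟩ := hM
    -- every generator of the ideal acts by zero on a brick
    have hS0 : ∀ s ∈ S, ∀ m : M, s • m = 0 := by
      intro s hs m
      let φ : M →ₗ[A] M :=
        { toFun := fun m => s • m
          map_add' := fun x y => smul_add s x y
          map_smul' := by
            intro a x
            show s • a • x = a • s • x
            have hcomm : s * a = a * s := (Set.mem_center_iff.mp (hcen hs)).comm a
            rw [smul_smul, smul_smul, hcomm] }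
      obtain ⟨c, hc⟩ := hend φ
      by_cases hc0 : c = 0
      · have h1 := hc m
        rw [hc0, map_zero, zero_smul] at h1
        exact h1
      · exfalso
        obtain ⟨u, hu⟩ := hrad s hs (algebraMap 𝔽 A c⁻¹)
        have hzero : ∀ x : M, x = 0 := by
          intro x
          have h1 : (1 - algebraMap 𝔽 A c⁻¹ * s) • x = 0 := by
            rw [sub_smul, one_smul, mul_smul]
            have h2 : s • x = algebraMap 𝔽 A c • x := hc x
            rw [h2, smul_smul, ← map_mul, inv_mul_cancel₀ hc0, map_one, one_smul, sub_self]
          calc x = (u.inv * u.val) • x := by rw [u.inv_val, one_smul]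
          _ = u.inv • (u.val • x) := mul_smul _ _ _
          _ = 0 := by rw [hu, h1, smul_zero]
        have h01 : (0:𝔽) = 1 := hsep 0 1 (fun x => by rw [hzero x, smul_zero, smul_zero])
        exact zero_ne_one h01
    have hker0 : ∀ a : A, π a = 0 → ∀ m : M, a • m = 0 := by
      intro a ha m
      obtain ⟨n, f, g, t, ht, rfl⟩ := (hker a).mp ha
      rw [Finset.sum_smul]
      refine Finset.sum_eq_zero fun i _ => ?_
      rw [mul_smul, mul_smul, hS0 (t i) (ht i), smul_zero]
    have key : ∀ a a' : A, π a = π a' → ∀ m : M, a • m = a' • m := by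
      intro a a' h m
      have h1 := hker0 (a - a') (by rw [map_sub, h, sub_self]) m
      rw [sub_smul, sub_eq_zero] at h1
      exact h1
    let σ : B → A := Function.surjInv hsurj
    have hσ : ∀ b, π (σ b) = b := fun b => Function.surjInv_eq hsurj b
    letI modB : Module B M :=
      { smul := fun b m => σ b • m
        one_smul := fun m => by
          show σ 1 • m = m
          rw [key (σ 1) 1 (by rw [hσ, map_one]), one_smul]
        mul_smul := fun b b' m => by
          show σ (b * b') • m = σ b • σ b' • m
          rw [key (σ (b*b')) (σ b * σ b') (by rw [hσ, map_mul, hσ, hσ]), mul_smul]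
        smul_zero := fun b => by show σ b • (0:M) = 0; rw [smul_zero]
        smul_add := fun b m m' => by
          show σ b • (m+m') = σ b • m + σ b • m'
          rw [smul_add]
        add_smul := fun b b' m => by
          show σ (b + b') • m = σ b • m + σ b' • m
          rw [key (σ (b+b')) (σ b + σ b') (by rw [hσ, map_add, hσ, hσ]), add_smul]
        zero_smul := fun m => by
          show σ 0 • m = 0
          rw [key (σ 0) 0 (by rw [hσ, map_zero]), zero_smul] }
    let N : ModuleCat.{0} B := ModuleCat.of B M
    have hAB : ∀ (a : A) (m : M), a • m = (π a • m : M) := by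
      intro a m
      show a • m = σ (π a) • m
      exact key a (σ (π a)) (by rw [hσ]) m
    let eMN : M ≃ₗ[A] ((ModuleCat.restrictScalars π.toRingHom).obj N) :=
      { toFun := id
        invFun := id
        left_inv := fun _ => rfl
        right_inv := fun _ => rfl
        map_add' := fun _ _ => rfl
        map_smul' := fun a x => by
          show a • x = σ (π a) • x
          exact key a (σ (π a)) (by rw [hσ]) x }
    have hfinB : Module.Finite B (M : Type) := by
        rw [Module.finite_def, Submodule.fg_def]
        obtain ⟨s, hsfin, hs⟩ := Submodule.fg_def.mp hfin.fg_top
        refine ⟨s, hsfin, ?_⟩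
        rw [eq_top_iff]
        intro x _
        have hx : x ∈ Submodule.span A s := by rw [hs]; trivial
        let q : Submodule A M :=
          { carrier := (Submodule.span B s : Set _)
            add_mem' := fun {y z} h1 h2 => Submodule.add_mem _ h1 h2
            zero_mem' := Submodule.zero_mem _
            smul_mem' := by
              intro a y hy
              have : a • y = (π a • y : M) := hAB a y
              rw [this]
              exact Submodule.smul_mem (Submodule.span B s) (π a) hy }
        have hle : Submodule.span A s ≤ q :=
          Submodule.span_le.2 (Submodule.subset_span (R := B))
        exact hle hx
    have hNbrick : IsBrick 𝔽 B N := by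
      refine ⟨hfinB, ?_, ?_⟩
      · intro ψ
        let ψ' : (M : Type) →ₗ[B] (M : Type) :=
          { toFun := fun x => ψ x
            map_add' := fun x y => ψ.map_add x y
            map_smul' := fun b x => ψ.map_smul b x }
        let φ : M →ₗ[A] M :=
          { toFun := ψ'
            map_add' := ψ'.map_add
            map_smul' := by
              intro a x
              show ψ' (a • x) = a • ψ' x
              rw [hAB a x, hAB a (ψ' x)]
              exact ψ'.map_smul (π a) x }
        obtain ⟨c, hc⟩ := hend φ
        refine ⟨c, ?_⟩
        have hc2 : ∀ x : (M : Type), ψ' x = algebraMap 𝔽 B c • x := by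
          intro x
          have h1 := hc x
          rw [hAB] at h1
          rw [π.commutes] at h1
          exact h1
        exact hc2
      · intro c c' h
        refine hsep c c' fun x => ?_
        rw [hAB, hAB, π.commutes, π.commutes]
        exact h x
    obtain ⟨i, ⟨e⟩⟩ := hrep N hNbrick
    exact ⟨i, ⟨(LinearEquiv.toModuleIso (X₁ := M) eMN) ≪≫
      (ModuleCat.restrictScalars π.toRingHom).mapIso e⟩⟩
end
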